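/- arXiv:2501.05543 — 11 statements merged into one kernel-verified Lean document; each statement's English description precedes it below -/
import Mathlib

section
/- Let N ≥ 1 be an integer, let a_1, …, a_N be nonzero real numbers and let m be a real number. Then the real polynomial F̂(x) = (1 − x²)·∏_{i=1}^N (x² + a_i²) + 2mx has at most four distinct real roots. -/
/-!
Write `b i = a i ^ 2` and `P u = ∏ i, (u + b i)`. For `m ≠ 0` no two roots of `F̂` are opposite
(subtracting the equations gives `4 m x = 0`, and `0` is not a root), so `x ↦ x²` embeds the roots
into the level set `φ u = 4 m²`, `u > 0`, of `φ u = (1 - u)² P(u)² / u`. Its derivative is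
`φ' = (1 - u) P² ψ / u²` with `ψ u = 2 u (1 - u) ∑ i, 1 / (u + b i) - (1 + u)`, which is strictly
concave on `u > 0`, being affine minus a positive combination of the `1 / (u + b i)`. Hence `φ'`
has at most three zeros there, and Rolle's theorem bounds the level set by four.
For `m = 0` the roots are `±1`.
-/

open Set

theorem exists_strictMono_fin_of_le_encard {α : Type*} [LinearOrder α] {s : Set α} {k : ℕ}
    (h : (k : ℕ∞) ≤ s.encard) : ∃ f : Fin k → α, StrictMono f ∧ ∀ i, f i ∈ s := by
  obtain ⟨t, hts, htk⟩ := exists_subset_encard_eq h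
  have ht : t.Finite := finite_of_encard_eq_coe htk
  have hcard : ht.toFinset.card = k := by
    simpa [ht.encard_eq_coe_toFinset_card] using htk
  exact ⟨fun i => ht.toFinset.orderEmbOfFin hcard i, (ht.toFinset.orderEmbOfFin hcard).strictMono,
    fun i => hts (ht.mem_toFinset.mp (Finset.orderEmbOfFin_mem _ hcard i))⟩

theorem StrictConcaveOn.encard_level_le_two {s : Set ℝ} {f : ℝ → ℝ} (hf : StrictConcaveOn ℝ s f)
    (c : ℝ) : {x ∈ s | f x = c}.encard ≤ 2 := by
  by_contra! h
  obtain ⟨g, hg, hgs⟩ := exists_strictMono_fin_of_le_encard (k := 3) (Order.add_one_le_of_lt h)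
  have hmid : g 1 ∈ openSegment ℝ (g 0) (g 2) :=
    Ioo_subset_openSegment ⟨hg (by decide), hg (by decide)⟩
  have := hf.lt_on_openSegment (hgs 0).1 (hgs 2).1 (hg (by decide)).ne hmid
  simp [(hgs 0).2, (hgs 1).2, (hgs 2).2] at this

theorem encard_level_le_encard_critical_add_one {s : Set ℝ} (hs : s.OrdConnected) {f f' : ℝ → ℝ}
    (hf : ∀ x ∈ s, HasDerivAt f (f' x) x) (c : ℝ) :
    {x ∈ s | f x = c}.encard ≤ {x ∈ s | f' x = 0}.encard + 1 := by
  by_contra! h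
  obtain ⟨n, hn⟩ := ENat.ne_top_iff_exists.mp
    fun htop : {x ∈ s | f' x = 0}.encard = ⊤ => by simp [htop] at h
  rw [← hn] at h
  obtain ⟨g, hg, hgs⟩ := exists_strictMono_fin_of_le_encard (k := n + 2) (Order.add_one_le_of_lt h)
  have hrolle : ∀ i : Fin (n + 1), ∃ y ∈ Ioo (g i.castSucc) (g i.succ), f' y = 0 := by
    intro i
    have hlt : g i.castSucc < g i.succ := hg i.castSucc_lt_succ
    have hIcc : Icc (g i.castSucc) (g i.succ) ⊆ s := hs.out (hgs _).1 (hgs _).1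
    exact exists_hasDerivAt_eq_zero hlt
      (fun x hx => (hf x (hIcc hx)).continuousAt.continuousWithinAt)
      ((hgs _).2.trans (hgs _).2.symm) (fun x hx => hf x (hIcc (Ioo_subset_Icc_self hx)))
  choose y hy hy' using hrolle
  have hymono : StrictMono y := fun i j hij =>
    calc y i < g i.succ := (hy i).2
      _ ≤ g j.castSucc := hg.monotone (Fin.succ_le_castSucc_iff.mpr hij)
      _ < y j := (hy j).1
  have := encard_le_encard_of_injOn (s := univ) (t := {x ∈ s | f' x = 0})
    (fun i _ => ⟨hs.out (hgs _).1 (hgs _).1 (Ioo_subset_Icc_self (hy i)), hy' i⟩)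
    hymono.injective.injOn
  rw [encard_univ, ← hn, ENat.card_eq_coe_fintype_card, Fintype.card_fin] at this
  norm_cast at this
  omega

theorem strictConvexOn_sum_div_add {ι : Type*} [Fintype ι] [Nonempty ι] {b c : ι → ℝ}
    (hb : ∀ i, 0 ≤ b i) (hc : ∀ i, 0 < c i) :
    StrictConvexOn ℝ (Ioi 0) fun u => ∑ i, c i / (u + b i) := by
  have hinv := strictConvexOn_zpow (m := -1) (by norm_num) (by norm_num)
  refine ⟨convex_Ioi 0, fun x (hx : 0 < x) y (hy : 0 < y) hxy s t hs ht hst => ?_⟩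
  simp only [smul_eq_mul, Finset.mul_sum, ← Finset.sum_add_distrib]
  refine Finset.sum_lt_sum_of_nonempty Finset.univ_nonempty fun i _ => ?_
  have hX : x + b i ∈ Ioi 0 := by simp only [mem_Ioi]; linarith [hb i]
  have hY : y + b i ∈ Ioi 0 := by simp only [mem_Ioi]; linarith [hb i]
  have key := hinv.2 hX hY (by simpa using hxy) hs ht hst
  have hcomb : s * (x + b i) + t * (y + b i) = s * x + t * y + b i := by
    linear_combination b i * hst
  simp only [smul_eq_mul, zpow_neg_one, hcomb] at key
  have := mul_lt_mul_of_pos_left key (hc i)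
  simpa only [div_eq_mul_inv, mul_add, mul_left_comm] using this

namespace HorizonPolynomial

variable {ι : Type*} [Fintype ι] (b : ι → ℝ)

-- `P`, `φ`, `ψ` and the roots of `F̂`, with `b i` in place of `a i ^ 2`.
noncomputable def shiftProd (u : ℝ) : ℝ := ∏ i, (u + b i)

noncomputable def levelFun (u : ℝ) : ℝ := (1 - u) ^ 2 * shiftProd b u ^ 2 / u

noncomputable def critFactor (u : ℝ) : ℝ := 2 * u * (1 - u) * (∑ i, (u + b i)⁻¹) - (1 + u)

def roots (m : ℝ) : Set ℝ := {x | (1 - x ^ 2) * shiftProd b (x ^ 2) + 2 * m * x = 0}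

variable {b}

theorem shiftProd_pos (hb : ∀ i, 0 < b i) {u : ℝ} (hu : 0 ≤ u) : 0 < shiftProd b u :=
  Finset.prod_pos fun i _ => by linarith [hb i]

theorem hasDerivAt_shiftProd {u : ℝ} (hu : ∀ i, u + b i ≠ 0) :
    HasDerivAt (shiftProd b) (shiftProd b u * ∑ i, (u + b i)⁻¹) u := by
  classical
  convert! HasDerivAt.fun_finsetProd (u := Finset.univ)
    fun i _ => (hasDerivAt_id u).add_const (b i) using 1
  rw [Finset.mul_sum]
  refine Finset.sum_congr rfl fun i _ => ?_
  rw [id, smul_eq_mul, mul_one, mul_inv_eq_iff_eq_mul₀ (hu i), shiftProd,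
    Finset.prod_erase_mul _ _ (Finset.mem_univ i)]

theorem hasDerivAt_levelFun {u : ℝ} (hu : u ≠ 0) (hub : ∀ i, u + b i ≠ 0) :
    HasDerivAt (levelFun b) ((1 - u) * shiftProd b u ^ 2 * critFactor b u / u ^ 2) u := by
  have hP := hasDerivAt_shiftProd hub
  have := ((((hasDerivAt_id u).const_sub 1).fun_pow 2).fun_mul (hP.fun_pow 2)).fun_div
    (hasDerivAt_id u) hu
  convert! this using 1
  simp only [critFactor, id, Nat.cast_ofNat]
  field_simp
  ring

theorem strictConcaveOn_critFactor [Nonempty ι] (hb : ∀ i, 0 < b i) :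
    StrictConcaveOn ℝ (Ioi 0) (critFactor b) := by
  set A := ∑ i, (2 + 2 * b i) - 1
  set B := 2 * (Fintype.card ι : ℝ) + 1
  have haff : ConcaveOn ℝ (Ioi 0) fun u => A - B * u :=
    ⟨convex_Ioi 0, fun x _ y _ s t _ _ hst => le_of_eq (by
      simp only [smul_eq_mul]; linear_combination A * hst)⟩
  have hconv := strictConvexOn_sum_div_add (fun i => (hb i).le)
    (c := fun i => 2 * b i * (1 + b i)) fun i => by have := hb i; positivity
  refine (haff.sub_strictConvexOn hconv).congr fun u (hu : 0 < u) => ?_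
  have hub : ∀ i, u + b i ≠ 0 := fun i => by linarith [hb i]
  have hterm : ∀ i, 2 * u * (1 - u) * (u + b i)⁻¹
      = 2 + 2 * b i - 2 * u - 2 * b i * (1 + b i) / (u + b i) := fun i => by
    field_simp [hub i]
    ring
  rw [Pi.sub_apply, critFactor, Finset.mul_sum, Finset.sum_congr rfl fun i _ => hterm i,
    Finset.sum_sub_distrib, Finset.sum_sub_distrib, Finset.sum_const, Finset.card_univ, nsmul_eq_mul]
  ring

theorem encard_critFactor_zeros_le_two (hb : ∀ i, 0 < b i) :
    {u ∈ Ioi 0 | critFactor b u = 0}.encard ≤ 2 := by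
  cases isEmpty_or_nonempty ι
  · have hempty : {u ∈ Ioi 0 | critFactor b u = 0} = ∅ := by
      refine eq_empty_of_forall_notMem fun u ⟨hu, h⟩ => ?_
      simp only [critFactor, Finset.univ_eq_empty, Finset.sum_empty, mul_zero, zero_sub,
        neg_eq_zero] at h
      linarith [mem_Ioi.mp hu]
    rw [hempty, encard_empty]
    exact zero_le
  · exact (strictConcaveOn_critFactor hb).encard_level_le_two 0

theorem encard_levelFun_level_le_four (hb : ∀ i, 0 < b i) (c : ℝ) :
    {u ∈ Ioi 0 | levelFun b u = c}.encard ≤ 4 := by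
  have hcrit : {u ∈ Ioi 0 | (1 - u) * shiftProd b u ^ 2 * critFactor b u / u ^ 2 = 0}
      ⊆ insert 1 {u ∈ Ioi 0 | critFactor b u = 0} := by
    rintro u ⟨hu, h⟩
    have hP := (shiftProd_pos hb (mem_Ioi.mp hu).le).ne'
    have hu' := (mem_Ioi.mp hu).ne'
    simp only [div_eq_zero_iff, mul_eq_zero, pow_eq_zero_iff two_ne_zero, hP, hu', or_false,
      sub_eq_zero] at h
    rcases h with h | h
    · exact .inl h.symm
    · exact .inr ⟨hu, h⟩
  calc {u ∈ Ioi 0 | levelFun b u = c}.encard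
      ≤ {u ∈ Ioi 0 | (1 - u) * shiftProd b u ^ 2 * critFactor b u / u ^ 2 = 0}.encard + 1 :=
        encard_level_le_encard_critical_add_one ordConnected_Ioi (fun u (hu : 0 < u) =>
          hasDerivAt_levelFun hu.ne' fun i => by linarith [hb i]) c
    _ ≤ (insert 1 {u ∈ Ioi 0 | critFactor b u = 0}).encard + 1 := by gcongr
    _ ≤ {u ∈ Ioi 0 | critFactor b u = 0}.encard + 1 + 1 := by gcongr; exact encard_insert_le _ _
    _ ≤ 2 + 1 + 1 := by gcongr; exact encard_critFactor_zeros_le_two hb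
    _ = 4 := by norm_num

theorem roots_zero_subset (hb : ∀ i, 0 < b i) : roots b 0 ⊆ {-1, 1} := by
  intro x (hx : (1 - x ^ 2) * shiftProd b (x ^ 2) + 2 * 0 * x = 0)
  have hP := (shiftProd_pos hb (sq_nonneg x)).ne'
  have hsq : (x + 1) * (x - 1) = 0 := by
    have : 1 - x ^ 2 = 0 := by simpa [hP] using hx
    linear_combination -this
  rw [mem_insert_iff, mem_singleton_iff]
  rcases mul_eq_zero.mp hsq with h | h
  · exact .inl (by linarith)
  · exact .inr (by linarith)

theorem injOn_sq_roots {m : ℝ} (hm : m ≠ 0) : InjOn (· ^ 2) (roots b m) := by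
  intro x (hx : (1 - x ^ 2) * shiftProd b (x ^ 2) + 2 * m * x = 0)
    y (hy : (1 - y ^ 2) * shiftProd b (y ^ 2) + 2 * m * y = 0) (hxy : x ^ 2 = y ^ 2)
  rcases sq_eq_sq_iff_eq_or_eq_neg.mp hxy with h | rfl
  · exact h
  · rw [neg_sq] at hx
    have : 4 * m * y = 0 := by linear_combination hy - hx
    have hy0 : y = 0 := by simpa [hm] using this
    rw [hy0, neg_zero]

theorem mapsTo_sq_roots (hb : ∀ i, 0 < b i) (m : ℝ) :
    MapsTo (· ^ 2) (roots b m) {u ∈ Ioi 0 | levelFun b u = 4 * m ^ 2} := by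
  intro x (hx : (1 - x ^ 2) * shiftProd b (x ^ 2) + 2 * m * x = 0)
  have hx0 : x ≠ 0 := by
    rintro rfl
    simp [(shiftProd_pos hb le_rfl).ne'] at hx
  have hu : 0 < x ^ 2 := by positivity
  refine ⟨hu, ?_⟩
  rw [levelFun, div_eq_iff hu.ne']
  linear_combination ((1 - x ^ 2) * shiftProd b (x ^ 2) - 2 * m * x) * hx

theorem encard_roots_le_four (hb : ∀ i, 0 < b i) (m : ℝ) : (roots b m).encard ≤ 4 := by
  rcases eq_or_ne m 0 with rfl | hm
  · calc (roots b 0).encard ≤ ({-1, 1} : Set ℝ).encard := encard_mono (roots_zero_subset hb)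
      _ ≤ 4 := by rw [encard_pair (by norm_num)]; norm_num
  · calc (roots b m).encard ≤ {u ∈ Ioi 0 | levelFun b u = 4 * m ^ 2}.encard :=
          encard_le_encard_of_injOn (mapsTo_sq_roots hb m) (injOn_sq_roots hm)
      _ ≤ 4 := encard_levelFun_level_le_four hb _

end HorizonPolynomial

theorem horizon_polynomial_at_most_four_roots_general
    (N : ℕ) (a : Fin N → ℝ) (ha : ∀ i, a i ≠ 0) (m : ℝ) :
    {x : ℝ | (1 - x ^ 2) * (∏ i, (x ^ 2 + a i ^ 2)) + 2 * m * x = 0}.encard ≤ 4 :=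
  HorizonPolynomial.encard_roots_le_four (fun i => sq_pos_of_ne_zero (ha i)) m

/-- Let `N ≥ 1`, let `a 0, …, a (N-1)` be nonzero reals and `m` a real.
Then the polynomial `F̂(x) = (1 - x²) ∏ᵢ (x² + aᵢ²) + 2 m x` has at most four
distinct real roots. -/
theorem horizon_polynomial_at_most_four_roots
    (N : ℕ) (hN : 1 ≤ N) (a : Fin N → ℝ) (ha : ∀ i, a i ≠ 0) (m : ℝ) :
    {x : ℝ | (1 - x ^ 2) * (∏ i, (x ^ 2 + a i ^ 2)) + 2 * m * x = 0}.encard ≤ 4 :=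
  horizon_polynomial_at_most_four_roots_general N a ha m
end

section
/- Let N ≥ 1 be an integer and a_1, …, a_N real numbers. Define h_1^{[k]} = −1 + Σ_{i=k+1}^{N} a_i² for 0 ≤ k ≤ N, and recursively h_ℓ^{[k]} = Σ_{i=k+1}^{N+2−ℓ} a_i² · h_{ℓ−1}^{[i]} for 2 ≤ ℓ ≤ N (sums over an empty index range are zero). Then for all integers i ∈ [1, N] and k₀ ∈ [0, N]: if h_i^{[k₀]} ≤ 0, then h_i^{[k]} ≤ 0 for every integer k with k₀ ≤ k ≤ N. -/
/-!
Induction on `ℓ`, with the claim that `{k | h_ℓ^{[k]} ≤ 0}` is an upper set. For `ℓ = 1` the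
coefficient is antitone in `k`. For larger `ℓ`, `h_ℓ^{[k]}` is a tail sum `∑_{i > k} aᵢ² h_{ℓ-1}^{[i]}`:
if some `h_{ℓ-1}^{[j]}` with `k₀ < j ≤ k` is nonpositive, then every term of the tail from `k` on is
nonpositive; otherwise the terms dropped in passing from `k₀` to `k` are nonnegative, so the sum
can only decrease.
-/

/-- The recursively defined coefficients `h_ℓ^{[k]}` appearing in the expansion of the
horizon polynomial: `h 1 k = -1 + ∑_{i=k+1}^N aᵢ²` and
`h ℓ k = ∑_{i=k+1}^{N+2-ℓ} aᵢ² · h (ℓ-1) i` for `ℓ ≥ 2` (empty sums are zero). -/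
noncomputable def hcoef (N : ℕ) (a : ℕ → ℝ) : ℕ → ℕ → ℝ
  | 0, _ => 0
  | 1, k => -1 + ∑ i ∈ Finset.Icc (k + 1) N, (a i) ^ 2
  | (ℓ + 2), k => ∑ i ∈ Finset.Icc (k + 1) (N + 2 - (ℓ + 2)), (a i) ^ 2 * hcoef N a (ℓ + 1) i

open Finset

lemma Antitone.isUpperSet_setOf_nonpos {f : ℕ → ℝ} (hf : Antitone f) :
    IsUpperSet {k | f k ≤ 0} :=
  fun _ _ hab ha => (hf hab).trans ha

lemma isUpperSet_setOf_tailSum_nonpos {w f : ℕ → ℝ} (hw : ∀ i, 0 ≤ w i)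
    (hf : IsUpperSet {k | f k ≤ 0}) (M : ℕ) :
    IsUpperSet {k | ∑ i ∈ Icc (k + 1) M, w i * f i ≤ 0} := by
  intro k₀ k hk h₀
  simp only [Set.mem_ofPred_eq] at h₀ ⊢
  by_cases hdropped : ∃ j ∈ Ioc k₀ k, f j ≤ 0
  · obtain ⟨j, hj, hfj⟩ := hdropped
    refine sum_nonpos fun i hi => mul_nonpos_of_nonneg_of_nonpos (hw i) (hf ?_ hfj)
    grind
  · push Not at hdropped
    refine le_trans (sum_le_sum_of_subset_of_nonneg ?_ fun j hj hjk => ?_) h₀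
    · exact Icc_subset_Icc_left (by omega)
    · exact mul_nonneg (hw j) (hdropped j (by grind)).le

lemma hcoef_one_antitone (N : ℕ) (a : ℕ → ℝ) : Antitone (hcoef N a 1) := by
  intro k₀ k hk
  simp only [hcoef, add_le_add_iff_left]
  exact sum_le_sum_of_subset_of_nonneg (Icc_subset_Icc_left (by omega))
    fun i _ _ => sq_nonneg (a i)

lemma isUpperSet_setOf_hcoef_nonpos (N : ℕ) (a : ℕ → ℝ) :
    ∀ ℓ, IsUpperSet {k | hcoef N a ℓ k ≤ 0}
  | 0 => fun _ _ _ _ => by simp [hcoef]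
  | 1 => (hcoef_one_antitone N a).isUpperSet_setOf_nonpos
  | ℓ + 2 => isUpperSet_setOf_tailSum_nonpos (fun i => sq_nonneg (a i))
      (isUpperSet_setOf_hcoef_nonpos N a (ℓ + 1)) (N + 2 - (ℓ + 2))

theorem hcoef_nonpos_monotone_general
    (N : ℕ) (a : ℕ → ℝ)
    (i k₀ : ℕ)
    (h0 : hcoef N a i k₀ ≤ 0) :
    ∀ k : ℕ, k₀ ≤ k → k ≤ N → hcoef N a i k ≤ 0 :=
  fun _ hk _ => isUpperSet_setOf_hcoef_nonpos N a i hk h0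

/-- For integers `i ∈ [1, N]` and `k₀ ∈ [0, N]`: if `h_i^{[k₀]} ≤ 0`, then
`h_i^{[k]} ≤ 0` for every integer `k` with `k₀ ≤ k ≤ N`. -/
theorem hcoef_nonpos_monotone
    (N : ℕ) (hN : 1 ≤ N) (a : ℕ → ℝ)
    (i k₀ : ℕ) (hi1 : 1 ≤ i) (hiN : i ≤ N) (hk₀ : k₀ ≤ N)
    (h0 : hcoef N a i k₀ ≤ 0) :
    ∀ k : ℕ, k₀ ≤ k → k ≤ N → hcoef N a i k ≤ 0 :=
  hcoef_nonpos_monotone_general N a i k₀ h0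
end

section
/- Let N ≥ 1 be an integer and a_1, …, a_N real numbers. With h_ℓ^{[k]} defined by h_1^{[k]} = −1 + Σ_{i=k+1}^{N} a_i² and h_ℓ^{[k]} = Σ_{i=k+1}^{N+2−ℓ} a_i² · h_{ℓ−1}^{[i]} for ℓ ≥ 2 (empty sums zero), and with A_k = Σ_{1 ≤ i_1 < … < i_k ≤ N} a_{i_1}² ⋯ a_{i_k}² the elementary symmetric polynomials of (a_1², …, a_N²) and A_0 = 1, one has h_ℓ^{[0]} = A_ℓ − A_{ℓ−1} for every integer 1 ≤ ℓ ≤ N. -/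
/-- `A k = ∑_{1 ≤ i₁ < … < i_k ≤ N} a_{i₁}² ⋯ a_{i_k}²`, the `k`-th elementary symmetric
polynomial of `(a₁², …, a_N²)`; note `A 0 = 1`. -/
noncomputable def esymA (N : ℕ) (a : ℕ → ℝ) (k : ℕ) : ℝ :=
  ∑ t ∈ Finset.powersetCard k (Finset.Icc 1 N), ∏ i ∈ t, (a i) ^ 2


/-! Writing `e_m^{[k]}` for the `m`-th elementary symmetric polynomial of `a_{k+1}², …, a_N²`,
one shows `h_{ℓ+1}^{[k]} = e_{ℓ+1}^{[k]} - e_ℓ^{[k]}` by induction on `ℓ`. Splitting a subset of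
`{k+1, …, N}` at its least element `i` gives `e_{m+1}^{[k]} = ∑_{i=k+1}^N a_i² e_m^{[i]}`, which
is exactly the recursion defining `h`; the cutoff `N + 2 - ℓ` there only drops indices `i` whose
tail `{i+1, …, N}` is too short to contribute. For `k = 0` this is `A_ℓ - A_{ℓ-1}`. -/

open Finset

theorem Multiset.esymm_cons_succ {R : Type*} [CommSemiring R] (x : R) (s : Multiset R) (m : ℕ) :
    (x ::ₘ s).esymm (m + 1) = x * s.esymm m + s.esymm (m + 1) := by
  simp only [esymm, powersetCard_cons, map_add, map_map, Function.comp_def, prod_cons,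
    sum_add, sum_map_mul_left]
  ring

noncomputable def tailEsymm (N : ℕ) (a : ℕ → ℝ) (k m : ℕ) : ℝ :=
  ((Icc (k + 1) N).val.map fun i => a i ^ 2).esymm m

section tailEsymm

variable (N : ℕ) (a : ℕ → ℝ)

theorem tailEsymm_zero (k : ℕ) : tailEsymm N a k 0 = 1 := by
  simp [tailEsymm, Multiset.esymm]

theorem tailEsymm_eq_zero_of_lt {k m : ℕ} (h : N - k < m) : tailEsymm N a k m = 0 := by
  rw [tailEsymm, Multiset.esymm, Multiset.powersetCard_eq_empty] <;> simp [h]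

theorem tailEsymm_succ_eq_add {k : ℕ} (hk : k < N) (m : ℕ) :
    tailEsymm N a k (m + 1) = a (k + 1) ^ 2 * tailEsymm N a (k + 1) m
      + tailEsymm N a (k + 1) (m + 1) := by
  rw [tailEsymm, Icc_eq_cons_Ioc (by omega), cons_val, Multiset.map_cons,
    Multiset.esymm_cons_succ, ← Icc_add_one_left_eq_Ioc]
  rfl

theorem tailEsymm_succ_eq_sum (k m : ℕ) :
    tailEsymm N a k (m + 1) = ∑ i ∈ Icc (k + 1) N, a i ^ 2 * tailEsymm N a i m := by
  rcases le_or_gt N k with hk | hk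
  · rw [tailEsymm_eq_zero_of_lt N a (by omega), Icc_eq_empty (by omega), sum_empty]
  · rw [tailEsymm_succ_eq_add N a hk, tailEsymm_succ_eq_sum (k + 1) m,
      Icc_eq_cons_Ioc (show k + 1 ≤ N by omega), sum_cons, ← Icc_add_one_left_eq_Ioc]
termination_by N - k

end tailEsymm

theorem hcoef_succ_eq_tailEsymm_sub (N : ℕ) (a : ℕ → ℝ) (ℓ k : ℕ) :
    hcoef N a (ℓ + 1) k = tailEsymm N a k (ℓ + 1) - tailEsymm N a k ℓ := by
  induction ℓ generalizing k with
  | zero =>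
    rw [hcoef, tailEsymm_succ_eq_sum]
    simp only [tailEsymm_zero, mul_one]
    ring
  | succ ℓ ih =>
    have hcut : ∀ i ∈ Icc (k + 1) N, i ∉ Icc (k + 1) (N + 2 - (ℓ + 2)) →
        a i ^ 2 * hcoef N a (ℓ + 1) i = 0 := by
      intro i hi hi'
      simp only [mem_Icc] at hi hi'
      rw [ih, tailEsymm_eq_zero_of_lt N a (by omega), tailEsymm_eq_zero_of_lt N a (by omega),
        sub_zero, mul_zero]
    rw [hcoef, sum_subset (Icc_subset_Icc_right (by omega)) hcut, tailEsymm_succ_eq_sum,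
      tailEsymm_succ_eq_sum, ← sum_sub_distrib]
    simp only [ih, mul_sub]

theorem esymA_eq_tailEsymm_zero (N : ℕ) (a : ℕ → ℝ) (m : ℕ) :
    esymA N a m = tailEsymm N a 0 m :=
  (esymm_map_val _ _ m).symm

theorem hcoef_eq_esym_diff_general
    (N : ℕ) (a : ℕ → ℝ) :
    ∀ ℓ : ℕ, 1 ≤ ℓ → ℓ ≤ N → hcoef N a ℓ 0 = esymA N a ℓ - esymA N a (ℓ - 1) := by
  rintro (_ | m) hm -
  · omega
  · simp only [hcoef_succ_eq_tailEsymm_sub, esymA_eq_tailEsymm_zero, Nat.add_sub_cancel]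

/-- For every integer `1 ≤ ℓ ≤ N` one has `h_ℓ^{[0]} = A_ℓ - A_{ℓ-1}`. -/
theorem hcoef_eq_esym_diff
    (N : ℕ) (hN : 1 ≤ N) (a : ℕ → ℝ) :
    ∀ ℓ : ℕ, 1 ≤ ℓ → ℓ ≤ N → hcoef N a ℓ 0 = esymA N a ℓ - esymA N a (ℓ - 1) :=
  hcoef_eq_esym_diff_general N a
end

section
/- Let N ≥ 1 be an integer, ℓ > 0, m ≠ 0, and a_1, …, a_N nonzero real numbers. Define F(r) = (ℓ² − r²)·∏_{i=1}^N (r² + a_i²) + 2ℓ²·m·r. If m > 0, then F has a root r_− with −ℓ < r_− < 0 and a root r_+ with r_+ > ℓ. If m < 0, then F has a root r_− with r_− < −ℓ and a root r_+ with 0 < r_+ < ℓ. -/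
/-!
`F(0) = ℓ² ∏ aᵢ² > 0`, `F(±ℓ) = ±2ℓ³m` and `F(r) → -∞` as `r → ∞`, so for `m > 0` the
intermediate value theorem gives a root in `(-ℓ, 0)` and one in `(ℓ, ∞)`. Since
`F_m(-r) = F_{-m}(r)`, the case `m < 0` is the mirror image of the case `m > 0`.
-/

theorem one_le_prod_sq_add_sq {ι : Type*} [Fintype ι] (a : ι → ℝ) {r : ℝ} (hr : 1 ≤ r) :
    1 ≤ ∏ i, (r ^ 2 + a i ^ 2) :=
  Finset.one_le_prod fun i _ => by nlinarith [sq_nonneg (a i)]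

def horizonFunction {ι : Type*} [Fintype ι] (L m : ℝ) (a : ι → ℝ) (r : ℝ) : ℝ :=
  (L ^ 2 - r ^ 2) * (∏ i, (r ^ 2 + a i ^ 2)) + 2 * L ^ 2 * m * r

namespace horizonFunction

variable {ι : Type*} [Fintype ι] (L m : ℝ) (a : ι → ℝ)

theorem continuous : Continuous (horizonFunction L m a) := by
  unfold horizonFunction
  fun_prop

theorem apply_neg (r : ℝ) : horizonFunction L m a (-r) = horizonFunction L (-m) a r := by
  simp only [horizonFunction, neg_sq]
  ring

theorem apply_of_sq_eq {r : ℝ} (hr : r ^ 2 = L ^ 2) :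
    horizonFunction L m a r = 2 * L ^ 2 * m * r := by
  simp [horizonFunction, hr]

theorem pos_at_zero (hL : L ≠ 0) (ha : ∀ i, a i ≠ 0) : 0 < horizonFunction L m a 0 := by
  simpa [horizonFunction] using
    mul_pos (pow_two_pos_of_ne_zero hL) (Finset.prod_pos fun i _ => pow_two_pos_of_ne_zero (ha i))

theorem le_of_one_le {r : ℝ} (h1 : 1 ≤ r) (hL : L ^ 2 ≤ r ^ 2) :
    horizonFunction L m a r ≤ L ^ 2 - r ^ 2 + 2 * L ^ 2 * m * r := by
  have hP := one_le_prod_sq_add_sq a h1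
  simp only [horizonFunction]
  nlinarith

theorem exists_gt_neg {L : ℝ} (hL : 0 < L) (hm : 0 < m) :
    ∃ r, L < r ∧ horizonFunction L m a r < 0 := by
  set r := 2 * L ^ 2 * m + L + 1
  have hm' : 0 ≤ 2 * L ^ 2 * m := by positivity
  have hLr : L < r := by linarith
  refine ⟨r, hLr, (le_of_one_le L m a (by linarith)
    (pow_le_pow_left₀ hL.le hLr.le 2)).trans_lt ?_⟩
  -- `r² - 2ℓ²mr = r (ℓ + 1) > ℓ²`
  nlinarith

theorem exists_root_Ioo_neg {L : ℝ} (hL : 0 < L) (hm : 0 < m) (ha : ∀ i, a i ≠ 0) :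
    ∃ r, horizonFunction L m a r = 0 ∧ -L < r ∧ r < 0 := by
  have hneg : horizonFunction L m a (-L) < 0 := by
    rw [apply_of_sq_eq L m a (neg_sq L)]
    nlinarith [mul_pos (mul_pos hL hL) hm]
  obtain ⟨r, ⟨hr₁, hr₂⟩, hr⟩ := intermediate_value_Ioo (by linarith)
    (continuous L m a).continuousOn ⟨hneg, pos_at_zero L m a hL.ne' ha⟩
  exact ⟨r, hr, hr₁, hr₂⟩

theorem exists_root_Ioi {L : ℝ} (hL : 0 < L) (hm : 0 < m) :
    ∃ r, horizonFunction L m a r = 0 ∧ L < r := by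
  obtain ⟨R, hLR, hR⟩ := exists_gt_neg m a hL hm
  have hpos : 0 < horizonFunction L m a L := by
    rw [apply_of_sq_eq L m a rfl]
    positivity
  obtain ⟨r, ⟨hr₁, -⟩, hr⟩ := intermediate_value_Ioo' hLR.le
    (continuous L m a).continuousOn ⟨hR, hpos⟩
  exact ⟨r, hr, hr₁⟩

theorem exists_root_Iio_neg {L : ℝ} (hL : 0 < L) (hm : m < 0) :
    ∃ r, horizonFunction L m a r = 0 ∧ r < -L := by
  obtain ⟨r, hr, hLr⟩ := exists_root_Ioi (-m) a hL (neg_pos.2 hm)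
  refine ⟨-r, ?_, neg_lt_neg hLr⟩
  rw [apply_neg, hr]

theorem exists_root_Ioo_pos {L : ℝ} (hL : 0 < L) (hm : m < 0) (ha : ∀ i, a i ≠ 0) :
    ∃ r, horizonFunction L m a r = 0 ∧ 0 < r ∧ r < L := by
  obtain ⟨r, hr, hLr, hr0⟩ := exists_root_Ioo_neg (-m) a hL (neg_pos.2 hm) ha
  refine ⟨-r, ?_, by linarith, by linarith⟩
  rw [apply_neg, hr]

end horizonFunction

theorem horizon_function_root_location_general
    (N : ℕ) (L : ℝ) (hL : 0 < L) (m : ℝ)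
    (a : Fin N → ℝ) (ha : ∀ i, a i ≠ 0) :
    (0 < m →
      (∃ r : ℝ, (L ^ 2 - r ^ 2) * (∏ i, (r ^ 2 + a i ^ 2)) + 2 * L ^ 2 * m * r = 0 ∧
        -L < r ∧ r < 0) ∧
      (∃ r : ℝ, (L ^ 2 - r ^ 2) * (∏ i, (r ^ 2 + a i ^ 2)) + 2 * L ^ 2 * m * r = 0 ∧
        L < r)) ∧
    (m < 0 →
      (∃ r : ℝ, (L ^ 2 - r ^ 2) * (∏ i, (r ^ 2 + a i ^ 2)) + 2 * L ^ 2 * m * r = 0 ∧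
        r < -L) ∧
      (∃ r : ℝ, (L ^ 2 - r ^ 2) * (∏ i, (r ^ 2 + a i ^ 2)) + 2 * L ^ 2 * m * r = 0 ∧
        0 < r ∧ r < L)) :=
  ⟨fun hm => ⟨horizonFunction.exists_root_Ioo_neg m a hL hm ha,
      horizonFunction.exists_root_Ioi m a hL hm⟩,
    fun hm => ⟨horizonFunction.exists_root_Iio_neg m a hL hm,
      horizonFunction.exists_root_Ioo_pos m a hL hm ha⟩⟩

/-- For `F(r) = (ℓ² - r²) ∏ᵢ (r² + aᵢ²) + 2 ℓ² m r` with `ℓ > 0`, `m ≠ 0`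
and all rotation parameters `aᵢ ≠ 0`: if `m > 0` then `F` has a root in `(-ℓ, 0)` and a
root in `(ℓ, ∞)`; if `m < 0` then `F` has a root in `(-∞, -ℓ)` and a root in `(0, ℓ)`. -/
theorem horizon_function_root_location
    (N : ℕ) (hN : 1 ≤ N) (L : ℝ) (hL : 0 < L) (m : ℝ) (hm : m ≠ 0)
    (a : Fin N → ℝ) (ha : ∀ i, a i ≠ 0) :
    (0 < m →
      (∃ r : ℝ, (L ^ 2 - r ^ 2) * (∏ i, (r ^ 2 + a i ^ 2)) + 2 * L ^ 2 * m * r = 0 ∧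
        -L < r ∧ r < 0) ∧
      (∃ r : ℝ, (L ^ 2 - r ^ 2) * (∏ i, (r ^ 2 + a i ^ 2)) + 2 * L ^ 2 * m * r = 0 ∧
        L < r)) ∧
    (m < 0 →
      (∃ r : ℝ, (L ^ 2 - r ^ 2) * (∏ i, (r ^ 2 + a i ^ 2)) + 2 * L ^ 2 * m * r = 0 ∧
        r < -L) ∧
      (∃ r : ℝ, (L ^ 2 - r ^ 2) * (∏ i, (r ^ 2 + a i ^ 2)) + 2 * L ^ 2 * m * r = 0 ∧
        0 < r ∧ r < L)) :=
  horizon_function_root_location_general N L hL m a ha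
end

section
/- Let N ≥ 1 be an integer, let a_1, …, a_N be nonzero real numbers, and let m be a real number satisfying 2|m| < ∏_{i=1}^N |a_i|^{(2N−1)/N}. Then for every real r one has ∏_{i=1}^N (r² + a_i²) > 2|m|·|r|. -/
/-!
Weighted AM–GM with weights `1/(2N)` and `1 - 1/(2N)` gives, factor by factor,
`|r|^{1/N} |aᵢ|^{(2N-1)/N} ≤ r² + aᵢ²`; multiplying the `N` factors turns `|r|^{1/N}` into `|r|`,
so `∏ᵢ (r² + aᵢ²) ≥ |r| ∏ᵢ |aᵢ|^{(2N-1)/N} > 2|m| |r|` for `r ≠ 0`.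
-/

open Finset

lemma rpow_mul_rpow_one_sub_le_add {x y w : ℝ} (hx : 0 ≤ x) (hy : 0 ≤ y) (hw₀ : 0 ≤ w)
    (hw₁ : w ≤ 1) : x ^ w * y ^ (1 - w) ≤ x + y := by
  have := Real.geom_mean_le_arith_mean2_weighted hw₀ (sub_nonneg.2 hw₁) hx hy (by ring)
  nlinarith

lemma abs_rpow_mul_abs_rpow_le_sq_add_sq (r a : ℝ) {w : ℝ} (hw₀ : 0 ≤ w) (hw₁ : w ≤ 1) :
    |r| ^ (2 * w) * |a| ^ (2 * (1 - w)) ≤ r ^ 2 + a ^ 2 := by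
  have hsq (x v : ℝ) : |x| ^ (2 * v) = (x ^ 2) ^ v := by
    rw [Real.rpow_mul (abs_nonneg x), Real.rpow_two, sq_abs]
  rw [hsq, hsq]
  exact rpow_mul_rpow_one_sub_le_add (sq_nonneg r) (sq_nonneg a) hw₀ hw₁

lemma abs_mul_prod_rpow_le_prod_sq_add_sq {ι : Type*} (s : Finset ι) (hs : s.Nonempty)
    (a : ι → ℝ) (r : ℝ) :
    |r| * ∏ i ∈ s, |a i| ^ ((2 * (#s : ℝ) - 1) / #s) ≤ ∏ i ∈ s, (r ^ 2 + a i ^ 2) := by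
  set n : ℝ := (#s : ℝ)
  have hn : (1 : ℝ) ≤ n := by simpa [n, Nat.one_le_iff_ne_zero] using hs.card_ne_zero
  have hw₀ : 0 ≤ (2 * n)⁻¹ := by positivity
  have hw₁ : (2 * n)⁻¹ ≤ 1 := inv_le_one_of_one_le₀ (by linarith)
  have hr : 2 * (2 * n)⁻¹ = n⁻¹ := by field_simp
  have ha : 2 * (1 - (2 * n)⁻¹) = (2 * n - 1) / n := by field_simp
  calc |r| * ∏ i ∈ s, |a i| ^ ((2 * n - 1) / n)
      = ∏ i ∈ s, |r| ^ n⁻¹ * |a i| ^ ((2 * n - 1) / n) := by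
        rw [prod_mul_distrib, prod_const, Real.rpow_inv_natCast_pow (abs_nonneg r) hs.card_ne_zero]
    _ ≤ ∏ i ∈ s, (r ^ 2 + a i ^ 2) := by
        refine prod_le_prod (fun i _ ↦ by positivity) fun i _ ↦ ?_
        rw [← hr, ← ha]
        exact abs_rpow_mul_abs_rpow_le_sq_add_sq r (a i) hw₀ hw₁

/-- If all `aᵢ ≠ 0` and `2|m| < ∏ᵢ |aᵢ|^{(2N-1)/N}`, then for every real
`r` one has `∏ᵢ (r² + aᵢ²) > 2 |m| |r|`. -/
theorem product_dominates_mass_term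
    (N : ℕ) (hN : 1 ≤ N) (a : Fin N → ℝ) (ha : ∀ i, a i ≠ 0) (m : ℝ)
    (hm : 2 * |m| < ∏ i, |a i| ^ ((2 * (N : ℝ) - 1) / (N : ℝ))) :
    ∀ r : ℝ, 2 * |m| * |r| < ∏ i, (r ^ 2 + a i ^ 2) := by
  intro r
  rcases eq_or_ne r 0 with rfl | hr
  · simpa using prod_pos fun i _ ↦ pow_pos (abs_pos.2 (ha i)) 2
  have hs : (univ : Finset (Fin N)).Nonempty := univ_nonempty_iff.2 ⟨⟨0, hN⟩⟩
  calc 2 * |m| * |r| < |r| * ∏ i, |a i| ^ ((2 * (N : ℝ) - 1) / N) := by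
        rw [mul_comm |r|]
        exact mul_lt_mul_of_pos_right hm (abs_pos.2 hr)
    _ ≤ ∏ i, (r ^ 2 + a i ^ 2) := by
        simpa using abs_mul_prod_rpow_le_prod_sq_add_sq univ hs a r
end

section
/- Let N ≥ 1 be an integer, ℓ > 0, a_1, …, a_N nonzero reals, m and r reals, μ ∈ ℝ^N. Set Ξ_i = 1 + a_i²/ℓ², W = 1 + Σ_{i=1}^N a_i² μ_i²/(ℓ² Ξ_i), U = (1 + Σ_{k=1}^N a_k² μ_k²/(r² + a_k²))·∏_{k=1}^N (r² + a_k²), and V = (r²/ℓ² − 1)·∏_{k=1}^N (r² + a_k²). Let ĝ be the (N+1) × (N+1) symmetric real matrix with entries ĝ_{00} = W(1 − r²/ℓ²) + (2mr/U)·W², ĝ_{0i} = ĝ_{i0} = (2mr/U)·W·a_i μ_i²/Ξ_i for 1 ≤ i ≤ N, and ĝ_{ij} = ((r² + a_i²) μ_i²/Ξ_i)·δ_{ij} + (2mr/U)·(a_i μ_i²/Ξ_i)·(a_j μ_j²/Ξ_j) for 1 ≤ i, j ≤ N. Then det ĝ = −W·(V − 2mr)·∏_{i=1}^N μ_i²/Ξ_i.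 -/
/-!
The matrix is `diag(Wκ, d) + c v vᵀ` with `κ = 1 - r²/ℓ²`, `c = 2mr/U`, `v = (W, b)`,
`bᵢ = aᵢμᵢ²/Ξᵢ` and `dᵢ = (r² + aᵢ²)μᵢ²/Ξᵢ`. Because `bᵢ = dᵢ eᵢ` with `eᵢ = aᵢ/(r² + aᵢ²)`,
eliminating the terms `c bᵢ bⱼ` with the first row (`W > 0`) leaves an arrowhead matrix whose
first row factors through `diag d`. This gives the matrix determinant lemma in the form
`det = (Wκ + cW² + cWκ ∑ bᵢeᵢ) ∏ dᵢ` without inverting `κ` or the `dᵢ`, any of which may vanish.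
What remains is `cU = 2mr` and `W + κ ∑ bᵢeᵢ = U / ∏ (r² + aᵢ²)`.
-/

open Matrix Finset

namespace Matrix

variable {ι : Type*} [DecidableEq ι]

theorem fromBlocks_eq_diagonal_add_smul_vecMulVec {R : Type*} [CommRing R] (α c w : R)
    (d b : ι → R) :
    fromBlocks (of fun _ _ : Fin 1 => α + c * w ^ 2) (of fun _ j => c * w * b j)
        (of fun i _ => c * w * b i) (of fun i j => (if i = j then d i else 0) + c * b i * b j) =
      diagonal (Sum.elim (fun _ => α) d) +
        c • vecMulVec (Sum.elim (fun _ => w) b) (Sum.elim (fun _ => w) b) := by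
  ext (i | i) (j | j)
  · simp [Subsingleton.elim i j, vecMulVec_apply, sq]
  · simp [vecMulVec_apply, mul_assoc]
  · simp [vecMulVec_apply]
    ring
  · simp [vecMulVec_apply, diagonal_apply, mul_assoc]

theorem det_arrowhead [Fintype ι] {R : Type*} [CommRing R] (α : R) (x y d : ι → R) :
    (fromBlocks (of fun _ _ : Fin 1 => α) (of fun _ j => x j * d j) (of fun i _ => y i)
      (diagonal d)).det = (α - ∑ i, x i * y i) * ∏ i, d i := by
  have hfactor : fromBlocks (of fun _ _ : Fin 1 => α) (of fun _ j => x j * d j)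
      (of fun i _ => y i) (diagonal d) =
      fromBlocks (of fun _ _ : Fin 1 => α) (of fun _ j => x j) (of fun i _ => y i) 1 *
        fromBlocks 1 0 0 (diagonal d) := by
    rw [fromBlocks_multiply]
    congr 1 <;> ext <;> simp [mul_apply, diagonal_apply]
  rw [hfactor, det_mul, det_fromBlocks_one₂₂, det_fromBlocks_zero₂₁, det_unique, det_one,
    det_diagonal, one_mul]
  simp [mul_apply]

theorem det_diagonal_add_smul_vecMulVec_self [Fintype ι] {K : Type*} [Field K] (α c w : K)
    (hw : w ≠ 0) (d e b : ι → K) (hb : b = d * e) :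
    (diagonal (Sum.elim (fun _ : Fin 1 => α) d) +
        c • vecMulVec (Sum.elim (fun _ => w) b) (Sum.elim (fun _ => w) b)).det =
      (α + c * w ^ 2 + c * α * ∑ i, b i * e i) * ∏ i, d i := by
  subst hb
  have hreduce : diagonal (Sum.elim (fun _ : Fin 1 => α) d) +
        c • vecMulVec (Sum.elim (fun _ => w) (d * e)) (Sum.elim (fun _ => w) (d * e)) =
      fromBlocks 1 0 (of fun i _ => d i * e i / w) 1 *
        fromBlocks (of fun _ _ : Fin 1 => α + c * w ^ 2) (of fun _ j => c * w * e j * d j)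
          (of fun i _ => -(α / w * (d i * e i))) (diagonal d) := by
    rw [fromBlocks_multiply]
    ext (i | i) (j | j)
    · simp [Subsingleton.elim i j, vecMulVec_apply, sq]
    · simp [vecMulVec_apply]
      ring
    · simp [vecMulVec_apply, mul_apply]
      field_simp
      ring
    · simp [vecMulVec_apply, diagonal_apply, mul_apply]
      field_simp
      ring
  rw [hreduce, det_mul, det_fromBlocks_zero₁₂, det_one, det_one, one_mul, one_mul, det_arrowhead]
  congr 1
  rw [sub_eq_add_neg, ← sum_neg_distrib, mul_sum]
  congr 1
  refine sum_congr rfl fun i _ => ?_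
  simp only [Pi.mul_apply]
  field_simp

end Matrix

theorem tphi_sector_det_general
    (N : ℕ) (L : ℝ) (a : Fin N → ℝ) (ha : ∀ i, a i ≠ 0)
    (m r : ℝ) (μ : Fin N → ℝ) :
    let Ξ : Fin N → ℝ := fun i => 1 + a i ^ 2 / L ^ 2
    let W : ℝ := 1 + ∑ i, a i ^ 2 * μ i ^ 2 / (L ^ 2 * Ξ i)
    let U : ℝ :=
      (1 + ∑ k, a k ^ 2 * μ k ^ 2 / (r ^ 2 + a k ^ 2)) * ∏ k, (r ^ 2 + a k ^ 2)
    let V : ℝ := (r ^ 2 / L ^ 2 - 1) * ∏ k, (r ^ 2 + a k ^ 2)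
    (Matrix.fromBlocks
        (Matrix.of fun _ _ : Fin 1 => W * (1 - r ^ 2 / L ^ 2) + 2 * m * r / U * W ^ 2)
        (Matrix.of fun (_ : Fin 1) (j : Fin N) => 2 * m * r / U * W * (a j * μ j ^ 2 / Ξ j))
        (Matrix.of fun (i : Fin N) (_ : Fin 1) => 2 * m * r / U * W * (a i * μ i ^ 2 / Ξ i))
        (Matrix.of fun i j : Fin N =>
          (if i = j then (r ^ 2 + a i ^ 2) * μ i ^ 2 / Ξ i else 0) +
            2 * m * r / U * (a i * μ i ^ 2 / Ξ i) * (a j * μ j ^ 2 / Ξ j))).det =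
      -W * (V - 2 * m * r) * ∏ i, μ i ^ 2 / Ξ i := by
  intro Ξ W U V
  have hΞ : ∀ i, 0 < Ξ i := fun i => by positivity
  have hR : ∀ i, 0 < r ^ 2 + a i ^ 2 := fun i => by have := ha i; positivity
  have hW : 0 < W :=
    add_pos_of_pos_of_nonneg one_pos (sum_nonneg fun i _ => by have := hΞ i; positivity)
  set c := 2 * m * r / U
  set κ := 1 - r ^ 2 / L ^ 2
  set b : Fin N → ℝ := fun i => a i * μ i ^ 2 / Ξ i
  set d : Fin N → ℝ := fun i => (r ^ 2 + a i ^ 2) * μ i ^ 2 / Ξ i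
  set e : Fin N → ℝ := fun i => a i / (r ^ 2 + a i ^ 2)
  have hbde : b = d * e := funext fun i => by
    have := hR i
    simp only [b, d, e, Pi.mul_apply]
    field_simp
  rw [fromBlocks_eq_diagonal_add_smul_vecMulVec,
    det_diagonal_add_smul_vecMulVec_self _ _ _ hW.ne' d e b hbde]
  have hprod : ∏ i, d i = (∏ k, (r ^ 2 + a k ^ 2)) * ∏ i, μ i ^ 2 / Ξ i := by
    rw [← prod_mul_distrib]
    exact prod_congr rfl fun i _ => mul_div_assoc _ _ _
  have hWU : W + κ * ∑ i, b i * e i = 1 + ∑ k, a k ^ 2 * μ k ^ 2 / (r ^ 2 + a k ^ 2) := by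
    rw [mul_sum, add_assoc, ← sum_add_distrib]
    refine congrArg _ (sum_congr rfl fun i _ => ?_)
    have := hR i
    simp only [b, e, κ, Ξ]
    field_simp
    ring
  have hU : 0 < U :=
    mul_pos (add_pos_of_pos_of_nonneg one_pos (sum_nonneg fun i _ => by have := hR i; positivity))
      (prod_pos fun i _ => hR i)
  have hcU : c * U = 2 * m * r := div_mul_cancel₀ _ hU.ne'
  linear_combination (c * W * (∏ k, (r ^ 2 + a k ^ 2)) * ∏ i, μ i ^ 2 / Ξ i) * hWU +
    (W * ∏ i, μ i ^ 2 / Ξ i) * hcU + (W * κ + c * W ^ 2 + c * (W * κ) * ∑ i, b i * e i) * hprod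

/-- Determinant of the `(N+1) × (N+1)` matrix `ĝ` of the
`(t, φ¹, …, φᴺ)`-sector of the metric (realized as a block matrix over `Fin 1 ⊕ Fin N`):
`det ĝ = -W (V - 2mr) ∏ᵢ μᵢ²/Ξᵢ`. -/
theorem tphi_sector_det
    (N : ℕ) (hN : 1 ≤ N) (L : ℝ) (hL : 0 < L) (a : Fin N → ℝ) (ha : ∀ i, a i ≠ 0)
    (m r : ℝ) (μ : Fin N → ℝ) :
    let Ξ : Fin N → ℝ := fun i => 1 + a i ^ 2 / L ^ 2
    let W : ℝ := 1 + ∑ i, a i ^ 2 * μ i ^ 2 / (L ^ 2 * Ξ i)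
    let U : ℝ :=
      (1 + ∑ k, a k ^ 2 * μ k ^ 2 / (r ^ 2 + a k ^ 2)) * ∏ k, (r ^ 2 + a k ^ 2)
    let V : ℝ := (r ^ 2 / L ^ 2 - 1) * ∏ k, (r ^ 2 + a k ^ 2)
    (Matrix.fromBlocks
        (Matrix.of fun _ _ : Fin 1 => W * (1 - r ^ 2 / L ^ 2) + 2 * m * r / U * W ^ 2)
        (Matrix.of fun (_ : Fin 1) (j : Fin N) => 2 * m * r / U * W * (a j * μ j ^ 2 / Ξ j))
        (Matrix.of fun (i : Fin N) (_ : Fin 1) => 2 * m * r / U * W * (a i * μ i ^ 2 / Ξ i))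
        (Matrix.of fun i j : Fin N =>
          (if i = j then (r ^ 2 + a i ^ 2) * μ i ^ 2 / Ξ i else 0) +
            2 * m * r / U * (a i * μ i ^ 2 / Ξ i) * (a j * μ j ^ 2 / Ξ j))).det =
      -W * (V - 2 * m * r) * ∏ i, μ i ^ 2 / Ξ i :=
  tphi_sector_det_general N L a ha m r μ
end

section
/- Let N ≥ 1 be an integer, ℓ > 0, a_1, …, a_N nonzero reals, m and r reals, μ ∈ ℝ^N. Set Ξ_i = 1 + a_i²/ℓ², P = ∏_{i=1}^N (r² + a_i²), V = (r²/ℓ² − 1)·P, W = 1 + Σ_{i=1}^N a_i² μ_i²/(ℓ² Ξ_i), S₁ = Σ_{i=1}^N a_i² μ_i²/(r² + a_i²), and S₂ = Σ_{i=1}^N a_i² μ_i²/(Ξ_i (r² + a_i²)). Then (r² − ℓ²)·(P·(1 + S₁) + 2mr·S₂) = ℓ²·((V − 2mr)·(1 + S₁) + 2mr·W). -/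
/-!
Since `ℓ² Ξᵢ = ℓ² + aᵢ²`, the factor `r² - ℓ² = (r² + aᵢ²) - (ℓ² + aᵢ²)` splits each term of
`(r² - ℓ²) S₂` into partial fractions, giving `(r² - ℓ²) S₂ = ℓ² (W - 1 - S₁)`; together with
`(r² - ℓ²) P = ℓ² V` the identity is linear in these two relations.
-/

section

variable {L r : ℝ}

theorem sub_sq_mul_div_xi_mul (hL : L ≠ 0) {a : ℝ} (hra : r ^ 2 + a ^ 2 ≠ 0) (c : ℝ) :
    (r ^ 2 - L ^ 2) * (c / ((1 + a ^ 2 / L ^ 2) * (r ^ 2 + a ^ 2))) =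
      L ^ 2 * (c / (L ^ 2 * (1 + a ^ 2 / L ^ 2)) - c / (r ^ 2 + a ^ 2)) := by
  have hΞ : 1 + a ^ 2 / L ^ 2 ≠ 0 := by positivity
  field_simp
  ring

theorem sub_sq_mul_sum_div_xi_mul {ι : Type*} [Fintype ι] (hL : L ≠ 0) {a : ι → ℝ}
    (hra : ∀ i, r ^ 2 + a i ^ 2 ≠ 0) (c : ι → ℝ) :
    (r ^ 2 - L ^ 2) * ∑ i, c i / ((1 + a i ^ 2 / L ^ 2) * (r ^ 2 + a i ^ 2)) =
      L ^ 2 * (∑ i, c i / (L ^ 2 * (1 + a i ^ 2 / L ^ 2)) - ∑ i, c i / (r ^ 2 + a i ^ 2)) := by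
  simp only [Finset.mul_sum, ← Finset.sum_sub_distrib, sub_sq_mul_div_xi_mul hL (hra _)]

end

theorem causality_identity_general
    (N : ℕ) (L : ℝ) (hL : 0 < L) (a : Fin N → ℝ) (ha : ∀ i, a i ≠ 0)
    (m r : ℝ) (μ : Fin N → ℝ) :
    let Ξ : Fin N → ℝ := fun i => 1 + a i ^ 2 / L ^ 2
    let P : ℝ := ∏ i, (r ^ 2 + a i ^ 2)
    let V : ℝ := (r ^ 2 / L ^ 2 - 1) * P
    let W : ℝ := 1 + ∑ i, a i ^ 2 * μ i ^ 2 / (L ^ 2 * Ξ i)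
    let S₁ : ℝ := ∑ i, a i ^ 2 * μ i ^ 2 / (r ^ 2 + a i ^ 2)
    let S₂ : ℝ := ∑ i, a i ^ 2 * μ i ^ 2 / (Ξ i * (r ^ 2 + a i ^ 2))
    (r ^ 2 - L ^ 2) * (P * (1 + S₁) + 2 * m * r * S₂) =
      L ^ 2 * ((V - 2 * m * r) * (1 + S₁) + 2 * m * r * W) := by
  intro Ξ P V W S₁ S₂
  have hP : (r ^ 2 - L ^ 2) * P = L ^ 2 * V := by
    simp only [V]
    field_simp
  have hS : (r ^ 2 - L ^ 2) * S₂ = L ^ 2 * (W - 1 - S₁) := by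
    have hra (i : Fin N) : r ^ 2 + a i ^ 2 ≠ 0 := by have := ha i; positivity
    simpa only [W, add_sub_cancel_left] using
      sub_sq_mul_sum_div_xi_mul hL.ne' hra (fun i => a i ^ 2 * μ i ^ 2)
  linear_combination (1 + S₁) * hP + 2 * m * r * hS

/-- The rational identity underlying the stable-causality criterion:
`(r² - ℓ²) (P (1 + S₁) + 2mr S₂) = ℓ² ((V - 2mr)(1 + S₁) + 2mr W)`. -/
theorem causality_identity
    (N : ℕ) (hN : 1 ≤ N) (L : ℝ) (hL : 0 < L) (a : Fin N → ℝ) (ha : ∀ i, a i ≠ 0)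
    (m r : ℝ) (μ : Fin N → ℝ) :
    let Ξ : Fin N → ℝ := fun i => 1 + a i ^ 2 / L ^ 2
    let P : ℝ := ∏ i, (r ^ 2 + a i ^ 2)
    let V : ℝ := (r ^ 2 / L ^ 2 - 1) * P
    let W : ℝ := 1 + ∑ i, a i ^ 2 * μ i ^ 2 / (L ^ 2 * Ξ i)
    let S₁ : ℝ := ∑ i, a i ^ 2 * μ i ^ 2 / (r ^ 2 + a i ^ 2)
    let S₂ : ℝ := ∑ i, a i ^ 2 * μ i ^ 2 / (Ξ i * (r ^ 2 + a i ^ 2))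
    (r ^ 2 - L ^ 2) * (P * (1 + S₁) + 2 * m * r * S₂) =
      L ^ 2 * ((V - 2 * m * r) * (1 + S₁) + 2 * m * r * W) :=
  causality_identity_general N L hL a ha m r μ
end

section
/- Let N ≥ 1 be an integer, ℓ > 0, a_1, …, a_N nonzero reals, r a nonzero real, and n ∈ ℝ^N with n ≠ 0. Set Ξ_i = 1 + a_i²/ℓ² and D = Σ_{k=1}^N a_k² n_k²/Ξ_k (note D > 0). Then the N × N symmetric real matrix σ with entries σ_{ij} = ((r² + a_i²)/Ξ_i)·δ_{ij} − ((1 − r²/ℓ²)/D)·(a_i² n_i/Ξ_i)·(a_j² n_j/Ξ_j) is positive definite. -/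
/-! Write `σ = diag w - c • v vᵀ` with `wᵢ = (r² + aᵢ²)/Ξᵢ > 0`, `vᵢ = aᵢ² nᵢ/Ξᵢ`,
`c = (1 - r²/ℓ²)/D`. By the weighted Cauchy–Schwarz inequality
`(v ⬝ x)² ≤ (∑ vᵢ²/wᵢ) (∑ wᵢ xᵢ²)`, such a matrix is positive definite as soon as
`c ∑ vᵢ²/wᵢ < 1`. That number is `0` if `D = 0` (division by zero), and otherwise an
average, with weights `aᵢ² nᵢ²/Ξᵢ` summing to `D`, of the numbers `(1 - r²/ℓ²) aᵢ²/(r² + aᵢ²)`, each of which is `< 1` because `r ≠ 0`. -/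

open Finset Matrix

theorem sq_dotProduct_le_sum_sq_div_mul_sum {ι K : Type*} [Fintype ι] [Field K] [LinearOrder K]
    [IsStrictOrderedRing K] {w : ι → K} (hw : ∀ i, 0 < w i) (v x : ι → K) :
    (v ⬝ᵥ x) ^ 2 ≤ (∑ i, v i ^ 2 / w i) * ∑ i, w i * x i ^ 2 :=
  sum_sq_le_sum_mul_sum_of_sq_le_mul _ (fun i _ => div_nonneg (sq_nonneg _) (hw i).le)
    (fun i _ => mul_nonneg (hw i).le (sq_nonneg _))
    (fun i _ => le_of_eq (by have := (hw i).ne'; field_simp))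

theorem sum_mul_div_sum_lt_one {ι K : Type*} [Fintype ι] [Field K] [LinearOrder K]
    [IsStrictOrderedRing K] {t d : ι → K} (ht : ∀ i, t i < 1) (hd : ∀ i, 0 ≤ d i) :
    (∑ i, t i * d i) / ∑ i, d i < 1 := by
  rcases (sum_nonneg fun i _ => hd i).eq_or_lt with hzero | hpos
  · rw [← hzero, div_zero]
    exact one_pos
  obtain ⟨j, -, hj⟩ := exists_lt_of_sum_lt (by simpa using hpos : ∑ _i : ι, (0 : K) < ∑ i, d i)
  refine (div_lt_one hpos).2 (sum_lt_sum (fun i _ => ?_) ⟨j, mem_univ j, ?_⟩)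
  · exact mul_le_of_le_one_left (hd i) (ht i).le
  · exact mul_lt_of_lt_one_left hj (ht j)

theorem dotProduct_diagonal_sub_smul_vecMulVec_mulVec {ι R : Type*} [Fintype ι] [DecidableEq ι]
    [CommRing R] (w v x : ι → R) (c : R) :
    x ⬝ᵥ ((diagonal w - c • vecMulVec v v) *ᵥ x) = ∑ i, w i * x i ^ 2 - c * (v ⬝ᵥ x) ^ 2 := by
  have hdiag : x ⬝ᵥ (diagonal w *ᵥ x) = ∑ i, w i * x i ^ 2 := by
    simp only [dotProduct, mulVec_diagonal]
    exact sum_congr rfl fun i _ => by ring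
  have hrank : x ⬝ᵥ (vecMulVec v v *ᵥ x) = (v ⬝ᵥ x) ^ 2 := by
    rw [vecMulVec_mulVec, op_smul_eq_smul, dotProduct_smul, dotProduct_comm, smul_eq_mul, sq]
  rw [sub_mulVec, smul_mulVec, dotProduct_sub, dotProduct_smul, hdiag, hrank, smul_eq_mul]

theorem posDef_diagonal_sub_smul_vecMulVec {ι : Type*} [Fintype ι] [DecidableEq ι]
    {w : ι → ℝ} (hw : ∀ i, 0 < w i) (v : ι → ℝ) {c : ℝ} (hc : c * ∑ i, v i ^ 2 / w i < 1) :
    (diagonal w - c • vecMulVec v v).PosDef := by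
  have hv : (vecMulVec v v).IsHermitian := by
    simpa using (posSemidef_vecMulVec_star_self v).isHermitian
  refine posDef_iff_dotProduct_mulVec.2
    ⟨(isHermitian_diagonal w).sub (hv.smul (IsSelfAdjoint.all c)), fun x hx => ?_⟩
  rw [star_trivial, dotProduct_diagonal_sub_smul_vecMulVec_mulVec]
  obtain ⟨i, hi⟩ := Function.ne_iff.mp hx
  have hQ : 0 < ∑ i, w i * x i ^ 2 :=
    sum_pos' (fun j _ => mul_nonneg (hw j).le (sq_nonneg _))
      ⟨i, mem_univ _, mul_pos (hw i) (pow_two_pos_of_ne_zero hi)⟩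
  have hS : 0 ≤ ∑ i, v i ^ 2 / w i := sum_nonneg fun i _ => div_nonneg (sq_nonneg _) (hw i).le
  have hCS := sq_dotProduct_le_sum_sq_div_mul_sum hw v x
  rcases le_or_gt c 0 with hc0 | hc0
  · nlinarith [sq_nonneg (v ⬝ᵥ x)]
  · nlinarith [mul_le_mul_of_nonneg_left hCS hc0.le]

theorem boundary_metric_posDef_general
    (N : ℕ) (L : ℝ) (a : Fin N → ℝ)
    (r : ℝ) (hr : r ≠ 0) (n : Fin N → ℝ) :
    let Ξ : Fin N → ℝ := fun i => 1 + a i ^ 2 / L ^ 2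
    let D : ℝ := ∑ k, a k ^ 2 * n k ^ 2 / Ξ k
    (Matrix.of fun i j : Fin N =>
        (if i = j then (r ^ 2 + a i ^ 2) / Ξ i else 0) -
          (1 - r ^ 2 / L ^ 2) / D * (a i ^ 2 * n i / Ξ i) * (a j ^ 2 * n j / Ξ j)).PosDef := by
  intro Ξ D
  have hΞ : ∀ i, 0 < Ξ i := fun i => by positivity
  have hr2 : 0 < r ^ 2 := pow_two_pos_of_ne_zero hr
  set w := fun i => (r ^ 2 + a i ^ 2) / Ξ i
  set v := fun i => a i ^ 2 * n i / Ξ i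
  have hσ : Matrix.of (fun i j => (if i = j then w i else 0) - (1 - r ^ 2 / L ^ 2) / D * v i * v j)
      = diagonal w - ((1 - r ^ 2 / L ^ 2) / D) • vecMulVec v v := by
    ext i j
    simp only [of_apply, Matrix.sub_apply, diagonal_apply, Matrix.smul_apply, vecMulVec_apply,
      smul_eq_mul]
    ring
  rw [hσ]
  refine posDef_diagonal_sub_smul_vecMulVec (fun i => by positivity) v ?_
  have ht : ∀ i, (1 - r ^ 2 / L ^ 2) * a i ^ 2 / (r ^ 2 + a i ^ 2) < 1 := fun i => by
    rw [div_lt_one (by positivity)]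
    nlinarith [div_nonneg hr2.le (sq_nonneg L), sq_nonneg (a i)]
  calc (1 - r ^ 2 / L ^ 2) / D * ∑ i, v i ^ 2 / w i
      = (∑ i, (1 - r ^ 2 / L ^ 2) * a i ^ 2 / (r ^ 2 + a i ^ 2) * (a i ^ 2 * n i ^ 2 / Ξ i)) /
          D := by
        rw [div_mul_eq_mul_div, mul_sum]
        congr 1
        refine sum_congr rfl fun i _ => ?_
        have := (hΞ i).ne'
        have : r ^ 2 + a i ^ 2 ≠ 0 := by positivity
        simp only [v, w]
        field_simp
    _ < 1 := sum_mul_div_sum_lt_one ht fun i => by positivity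

/-- With `ℓ > 0`, all `aᵢ ≠ 0`, `r ≠ 0`, `n ≠ 0`, `Ξᵢ = 1 + aᵢ²/ℓ²` and
`D = ∑ₖ aₖ² nₖ²/Ξₖ`, the matrix
`σ_{ij} = ((r² + aᵢ²)/Ξᵢ) δ_{ij} - ((1 - r²/ℓ²)/D) (aᵢ² nᵢ/Ξᵢ)(aⱼ² nⱼ/Ξⱼ)`
is positive definite. -/
theorem boundary_metric_posDef
    (N : ℕ) (hN : 1 ≤ N) (L : ℝ) (hL : 0 < L) (a : Fin N → ℝ) (ha : ∀ i, a i ≠ 0)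
    (r : ℝ) (hr : r ≠ 0) (n : Fin N → ℝ) (hn : n ≠ 0) :
    let Ξ : Fin N → ℝ := fun i => 1 + a i ^ 2 / L ^ 2
    let D : ℝ := ∑ k, a k ^ 2 * n k ^ 2 / Ξ k
    (Matrix.of fun i j : Fin N =>
        (if i = j then (r ^ 2 + a i ^ 2) / Ξ i else 0) -
          (1 - r ^ 2 / L ^ 2) / D * (a i ^ 2 * n i / Ξ i) * (a j ^ 2 * n j / Ξ j)).PosDef :=
  boundary_metric_posDef_general N L a r hr n
end

section
/- Let N ≥ 1 be an integer, ℓ > 0, a_1, …, a_N real numbers, and r real, μ ∈ ℝ^N. Set Ξ_i = 1 + a_i²/ℓ², W = 1 + Σ_{i=1}^N a_i² μ_i²/(ℓ² Ξ_i), and y² := r²·(1 + Σ_{i=1}^N μ_i²) − Σ_{i=1}^N (r² + a_i²) μ_i²/Ξ_i. Then ℓ² − y² = W·(ℓ² − r²). -/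
/-!
Termwise, `Ξ ℓ² = ℓ² + a²` gives `(r² + a²)/Ξ - r² = a² (ℓ² - r²)/(ℓ² Ξ)`; summing against the
weights `μᵢ²` turns `ℓ² - y²` into `(ℓ² - r²)` plus `∑ a² μᵢ² (ℓ² - r²)/(ℓ² Ξᵢ)`, which is `W (ℓ² - r²)`.
-/

open Finset

theorem sq_add_sq_mul_div_sub_sq_mul {L : ℝ} (hL : L ≠ 0) (a r m : ℝ) :
    (r ^ 2 + a ^ 2) * m / (1 + a ^ 2 / L ^ 2) - r ^ 2 * m =
      a ^ 2 * m / (L ^ 2 * (1 + a ^ 2 / L ^ 2)) * (L ^ 2 - r ^ 2) := by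
  have hΞ : 1 + a ^ 2 / L ^ 2 ≠ 0 := by positivity
  field_simp
  ring

theorem sub_sq_mul_one_add_sum_sub_sum {ι : Type*} (s : Finset ι) (L r : ℝ) (g w μ : ι → ℝ)
    (h : ∀ i ∈ s, g i - r ^ 2 * μ i ^ 2 = w i * (L ^ 2 - r ^ 2)) :
    L ^ 2 - (r ^ 2 * (1 + ∑ i ∈ s, μ i ^ 2) - ∑ i ∈ s, g i) =
      (1 + ∑ i ∈ s, w i) * (L ^ 2 - r ^ 2) := by
  have hsum := sum_congr rfl h
  rw [sum_sub_distrib, ← mul_sum, ← sum_mul] at hsum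
  linear_combination hsum

theorem kerr_schild_radial_identity_general
    (N : ℕ) (L : ℝ) (hL : 0 < L) (a : Fin N → ℝ)
    (r : ℝ) (μ : Fin N → ℝ) :
    let Ξ : Fin N → ℝ := fun i => 1 + a i ^ 2 / L ^ 2
    let W : ℝ := 1 + ∑ i, a i ^ 2 * μ i ^ 2 / (L ^ 2 * Ξ i)
    L ^ 2 - (r ^ 2 * (1 + ∑ i, μ i ^ 2) - ∑ i, (r ^ 2 + a i ^ 2) * μ i ^ 2 / Ξ i) =
      W * (L ^ 2 - r ^ 2) :=
  sub_sq_mul_one_add_sum_sub_sum _ L r _ _ μ fun i _ =>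
    sq_add_sq_mul_div_sub_sq_mul hL.ne' (a i) r (μ i ^ 2)

/-- With `Ξᵢ = 1 + aᵢ²/ℓ²`, `W = 1 + ∑ᵢ aᵢ² μᵢ²/(ℓ² Ξᵢ)` and
`y² = r² (1 + ∑ᵢ μᵢ²) - ∑ᵢ (r² + aᵢ²) μᵢ²/Ξᵢ`, one has `ℓ² - y² = W (ℓ² - r²)`. -/
theorem kerr_schild_radial_identity
    (N : ℕ) (hN : 1 ≤ N) (L : ℝ) (hL : 0 < L) (a : Fin N → ℝ)
    (r : ℝ) (μ : Fin N → ℝ) :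
    let Ξ : Fin N → ℝ := fun i => 1 + a i ^ 2 / L ^ 2
    let W : ℝ := 1 + ∑ i, a i ^ 2 * μ i ^ 2 / (L ^ 2 * Ξ i)
    L ^ 2 - (r ^ 2 * (1 + ∑ i, μ i ^ 2) - ∑ i, (r ^ 2 + a i ^ 2) * μ i ^ 2 / Ξ i) =
      W * (L ^ 2 - r ^ 2) :=
  kerr_schild_radial_identity_general N L hL a r μ
end

section
/- Let N ≥ 1 be an integer, ℓ > 0, a_1, …, a_N nonzero reals, m and r reals, and μ ∈ ℝ^N with μ_i ≠ 0 for all i. Set Ξ_i = 1 + a_i²/ℓ², W = 1 + Σ_{i=1}^N a_i² μ_i²/(ℓ² Ξ_i), U = (1 + Σ_{k=1}^N a_k² μ_k²/(r² + a_k²))·∏_{k=1}^N (r² + a_k²), V = (r²/ℓ² − 1)·∏_{k=1}^N (r² + a_k²), and S₂ = Σ_{k=1}^N a_k² μ_k²/((r² + a_k²) Ξ_k). Assume 1 + (2mr/U)·S₂ ≠ 0, and let h be the invertible N × N matrix with entries h_{ij} = ((r² + a_i²) μ_i²/Ξ_i)·δ_{ij} + (2mr/U)·(a_i μ_i²/Ξ_i)·(a_j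 μ_j²/Ξ_j), and set v_i = (2mr/U)·W·a_i μ_i²/Ξ_i. Then the Schur complement satisfies: W(1 − r²/ℓ²) + (2mr/U)·W² − vᵀ h⁻¹ v = −(V − 2mr)·W / ((1 + (2mr/U)·S₂)·∏_{k=1}^N (r² + a_k²)). -/
/-! `h` is a diagonal matrix `diag d` plus the rank-one term `c w wᵀ` with `c = 2mr/U`,
`wᵢ = aᵢ μᵢ²/Ξᵢ`, and `v = c W w`. Since `h (w/d) = (1 + c S₂) w` with `S₂ = wᵀ (w/d)`
(Sherman–Morrison), `vᵀ h⁻¹ v = (cW)² S₂ / (1 + c S₂)`. The partial fraction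
`1/(r² + a²) = 1/(ℓ² + a²) + (1 - r²/ℓ²)/((r² + a²) Ξ)` gives
`U = (W + (1 - r²/ℓ²) S₂) ∏ₖ (r² + aₖ²)`, and the claim becomes a rational identity. -/

namespace Matrix

variable {n K : Type*} [Fintype n] [DecidableEq n] [Field K] {d : n → K} (w : n → K) (c : K)

theorem diagonal_add_smul_vecMulVec_mulVec (y : n → K) :
    (diagonal d + c • vecMulVec w w) *ᵥ y = d * y + (c * (w ⬝ᵥ y)) • w := by
  ext i
  simp [add_mulVec, mulVec_diagonal, smul_mulVec, vecMulVec_mulVec]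
  ring

theorem diagonal_add_smul_vecMulVec_mulVec_div (hd : ∀ i, d i ≠ 0) :
    (diagonal d + c • vecMulVec w w) *ᵥ (w / d) = (1 + c * (w ⬝ᵥ (w / d))) • w := by
  rw [diagonal_add_smul_vecMulVec_mulVec, add_smul, one_smul]
  congr 1
  ext i
  exact mul_div_cancel₀ (w i) (hd i)

theorem eq_zero_of_diagonal_add_smul_vecMulVec_mulVec_eq_zero (hd : ∀ i, d i ≠ 0)
    (hS : 1 + c * (w ⬝ᵥ (w / d)) ≠ 0) {y : n → K}
    (hy : (diagonal d + c • vecMulVec w w) *ᵥ y = 0) : y = 0 := by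
  rw [diagonal_add_smul_vecMulVec_mulVec] at hy
  have hy' : y = -(c * (w ⬝ᵥ y)) • (w / d) := by
    ext i
    have := congrFun hy i
    simp only [Pi.add_apply, Pi.mul_apply, Pi.smul_apply, smul_eq_mul, Pi.zero_apply] at this
    simp only [Pi.smul_apply, Pi.div_apply, smul_eq_mul]
    field_simp [hd i]
    linear_combination this
  have hs : w ⬝ᵥ y = 0 := by
    have h := congrArg (w ⬝ᵥ ·) hy'
    simp only [dotProduct_smul, smul_eq_mul] at h
    have hs' : w ⬝ᵥ y * (1 + c * (w ⬝ᵥ (w / d))) = 0 := by linear_combination h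
    exact (mul_eq_zero.mp hs').resolve_right hS
  rw [hy', hs, mul_zero, neg_zero, zero_smul]

theorem isUnit_diagonal_add_smul_vecMulVec (hd : ∀ i, d i ≠ 0)
    (hS : 1 + c * (w ⬝ᵥ (w / d)) ≠ 0) : IsUnit (diagonal d + c • vecMulVec w w) := by
  rw [← mulVec_injective_iff_isUnit]
  intro y z hyz
  rw [← sub_eq_zero, ← mulVec_sub] at hyz
  exact sub_eq_zero.mp (eq_zero_of_diagonal_add_smul_vecMulVec_mulVec_eq_zero w c hd hS hyz)

theorem dotProduct_inv_diagonal_add_smul_vecMulVec_mulVec (hd : ∀ i, d i ≠ 0)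
    (hS : 1 + c * (w ⬝ᵥ (w / d)) ≠ 0) :
    w ⬝ᵥ (diagonal d + c • vecMulVec w w)⁻¹ *ᵥ w = w ⬝ᵥ (w / d) / (1 + c * (w ⬝ᵥ (w / d))) := by
  have := (isUnit_diagonal_add_smul_vecMulVec w c hd hS).invertible
  have hsol : (diagonal d + c • vecMulVec w w) *ᵥ ((1 + c * (w ⬝ᵥ (w / d)))⁻¹ • (w / d)) = w := by
    rw [mulVec_smul, diagonal_add_smul_vecMulVec_mulVec_div w c hd, smul_smul, inv_mul_cancel₀ hS,
      one_smul]
  rw [inv_mulVec_eq_vec hsol.symm, dotProduct_smul, smul_eq_mul, inv_mul_eq_div]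

end Matrix

open Matrix

theorem one_add_sum_div_eq_add_mul_sum {ι : Type*} [Fintype ι] {L r : ℝ} (a μ : ι → ℝ)
    (hL : L ≠ 0) (hra : ∀ k, r ^ 2 + a k ^ 2 ≠ 0) :
    1 + ∑ k, a k ^ 2 * μ k ^ 2 / (r ^ 2 + a k ^ 2) =
      (1 + ∑ k, a k ^ 2 * μ k ^ 2 / (L ^ 2 * (1 + a k ^ 2 / L ^ 2))) +
        (1 - r ^ 2 / L ^ 2) *
          ∑ k, a k ^ 2 * μ k ^ 2 / ((r ^ 2 + a k ^ 2) * (1 + a k ^ 2 / L ^ 2)) := by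
  rw [Finset.mul_sum, add_assoc, ← Finset.sum_add_distrib]
  congr 1
  refine Finset.sum_congr rfl fun k _ => ?_
  have hΞ : 1 + a k ^ 2 / L ^ 2 ≠ 0 := by positivity
  field_simp [hra k]
  ring

theorem schur_complement_scalar {W S x P M c : ℝ} (hM : M = c * (W + (1 - x) * S) * P)
    (hP : P ≠ 0) (hden : 1 + c * S ≠ 0) :
    W * (1 - x) + c * W ^ 2 - (c * W) ^ 2 * S / (1 + c * S) =
      -((x - 1) * P - M) * W / ((1 + c * S) * P) := by
  subst hM
  field_simp
  ring

theorem lapse_schur_complement_general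
    (N : ℕ) (L : ℝ) (hL : 0 < L) (a : Fin N → ℝ) (ha : ∀ i, a i ≠ 0)
    (m r : ℝ) (μ : Fin N → ℝ) (hμ : ∀ i, μ i ≠ 0) :
    let Ξ : Fin N → ℝ := fun i => 1 + a i ^ 2 / L ^ 2
    let W : ℝ := 1 + ∑ i, a i ^ 2 * μ i ^ 2 / (L ^ 2 * Ξ i)
    let U : ℝ :=
      (1 + ∑ k, a k ^ 2 * μ k ^ 2 / (r ^ 2 + a k ^ 2)) * ∏ k, (r ^ 2 + a k ^ 2)
    let V : ℝ := (r ^ 2 / L ^ 2 - 1) * ∏ k, (r ^ 2 + a k ^ 2)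
    let S₂ : ℝ := ∑ k, a k ^ 2 * μ k ^ 2 / ((r ^ 2 + a k ^ 2) * Ξ k)
    let h : Matrix (Fin N) (Fin N) ℝ := Matrix.of fun i j =>
      (if i = j then (r ^ 2 + a i ^ 2) * μ i ^ 2 / Ξ i else 0) +
        2 * m * r / U * (a i * μ i ^ 2 / Ξ i) * (a j * μ j ^ 2 / Ξ j)
    let v : Fin N → ℝ := fun i => 2 * m * r / U * W * (a i * μ i ^ 2 / Ξ i)
    1 + 2 * m * r / U * S₂ ≠ 0 →
      W * (1 - r ^ 2 / L ^ 2) + 2 * m * r / U * W ^ 2 - dotProduct v (Matrix.mulVec h⁻¹ v) =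
        -(V - 2 * m * r) * W /
          ((1 + 2 * m * r / U * S₂) * ∏ k, (r ^ 2 + a k ^ 2)) := by
  intro Ξ W U V S₂ h v hden
  set d : Fin N → ℝ := fun i => (r ^ 2 + a i ^ 2) * μ i ^ 2 / Ξ i
  set w : Fin N → ℝ := fun i => a i * μ i ^ 2 / Ξ i
  have hra : ∀ k, 0 < r ^ 2 + a k ^ 2 := fun k => by have := ha k; positivity
  have hd : ∀ k, d k ≠ 0 := fun k => by have := hra k; have := hμ k; positivity
  have hP : 0 < ∏ k, (r ^ 2 + a k ^ 2) := Finset.prod_pos fun k _ => hra k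
  have hU : U ≠ 0 := by
    have : 0 ≤ ∑ k, a k ^ 2 * μ k ^ 2 / (r ^ 2 + a k ^ 2) :=
      Finset.sum_nonneg fun k _ => by have := hra k; positivity
    positivity
  have hU_eq : U = (W + (1 - r ^ 2 / L ^ 2) * S₂) * ∏ k, (r ^ 2 + a k ^ 2) := by
    rw [← one_add_sum_div_eq_add_mul_sum a μ hL.ne' fun k => (hra k).ne']
  have hS₂ : w ⬝ᵥ (w / d) = S₂ := Finset.sum_congr rfl fun k _ => by
    have := (hra k).ne'; have := hμ k; have : Ξ k ≠ 0 := by positivity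
    simp only [w, d, Pi.div_apply]
    field_simp
  have hh : h = diagonal d + (2 * m * r / U) • vecMulVec w w := by
    ext i j
    by_cases hij : i = j <;> simp [h, d, w, hij, diagonal, vecMulVec] <;> ring
  have hv : v = (2 * m * r / U * W) • w := rfl
  rw [hv, hh, smul_dotProduct, mulVec_smul, dotProduct_smul,
    dotProduct_inv_diagonal_add_smul_vecMulVec_mulVec w _ hd (hS₂ ▸ hden), hS₂,
    smul_eq_mul, smul_eq_mul, ← mul_assoc, ← sq, ← mul_div_assoc]
  refine schur_complement_scalar ?_ hP.ne' hden
  rw [mul_assoc (2 * m * r / U), ← hU_eq, div_mul_cancel₀ _ hU]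

/-- The ADM lapse-squared (Schur complement) of the
`(t, φ¹, …, φᴺ)`-sector: with `h_{ij} = ((r² + aᵢ²) μᵢ²/Ξᵢ) δ_{ij} +
(2mr/U)(aᵢ μᵢ²/Ξᵢ)(aⱼ μⱼ²/Ξⱼ)` and `vᵢ = (2mr/U) W aᵢ μᵢ²/Ξᵢ`, assuming
`1 + (2mr/U) S₂ ≠ 0`,
`W (1 - r²/ℓ²) + (2mr/U) W² - vᵀ h⁻¹ v
  = -(V - 2mr) W / ((1 + (2mr/U) S₂) ∏ₖ (r² + aₖ²))`. -/
theorem lapse_schur_complement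
    (N : ℕ) (hN : 1 ≤ N) (L : ℝ) (hL : 0 < L) (a : Fin N → ℝ) (ha : ∀ i, a i ≠ 0)
    (m r : ℝ) (μ : Fin N → ℝ) (hμ : ∀ i, μ i ≠ 0) :
    let Ξ : Fin N → ℝ := fun i => 1 + a i ^ 2 / L ^ 2
    let W : ℝ := 1 + ∑ i, a i ^ 2 * μ i ^ 2 / (L ^ 2 * Ξ i)
    let U : ℝ :=
      (1 + ∑ k, a k ^ 2 * μ k ^ 2 / (r ^ 2 + a k ^ 2)) * ∏ k, (r ^ 2 + a k ^ 2)
    let V : ℝ := (r ^ 2 / L ^ 2 - 1) * ∏ k, (r ^ 2 + a k ^ 2)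
    let S₂ : ℝ := ∑ k, a k ^ 2 * μ k ^ 2 / ((r ^ 2 + a k ^ 2) * Ξ k)
    let h : Matrix (Fin N) (Fin N) ℝ := Matrix.of fun i j =>
      (if i = j then (r ^ 2 + a i ^ 2) * μ i ^ 2 / Ξ i else 0) +
        2 * m * r / U * (a i * μ i ^ 2 / Ξ i) * (a j * μ j ^ 2 / Ξ j)
    let v : Fin N → ℝ := fun i => 2 * m * r / U * W * (a i * μ i ^ 2 / Ξ i)
    1 + 2 * m * r / U * S₂ ≠ 0 →
      W * (1 - r ^ 2 / L ^ 2) + 2 * m * r / U * W ^ 2 - dotProduct v (Matrix.mulVec h⁻¹ v) =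
        -(V - 2 * m * r) * W /
          ((1 + 2 * m * r / U * S₂) * ∏ k, (r ^ 2 + a k ^ 2)) :=
  lapse_schur_complement_general N L hL a ha m r μ hμ
end

section
/- Let N ≥ 1 be an integer, ℓ > 0, a_1, …, a_N nonzero reals, and μ ∈ ℝ^N fixed. For r real with all r² + a_i² > 0 let γ̃(r) be the N × N matrix with entries γ̃_{ij}(r) = ((r² + a_i²)/Ξ_i)·δ_{ij} − (r²/(1 + Σ_{k=1}^N μ_k²))·μ_i μ_j − ((ℓ² − r²)/(4W))·(2 a_i² μ_i/(ℓ² Ξ_i))·(2 a_j² μ_j/(ℓ² Ξ_j)), where Ξ_i = 1 + a_i²/ℓ² and W = 1 + Σ_{i=1}^N a_i² μ_i²/(ℓ² Ξ_i). Then lim_{r → ∞} r^{−2N}·det γ̃(r) = ((1 + Σ_{i=1}^N a_i² μ_i²/(ℓ² Ξ_i))·(1 + Σ_{i=1}^N μ_i²)·∏_{i=1}^N Ξ_i)^{−1}; in particular this limit is strictly positive. -/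
/-!
`γ̃(r)` is affine in `r²`: `γ̃(r) = r² A + γ̃(0)`, hence
`r^{-2N} det γ̃(r) = det (A + r^{-2} γ̃(0)) → det A`.
Since `2 aᵢ² / (ℓ² Ξᵢ) = 2 (1 - Ξᵢ⁻¹)`, the leading matrix is
`A = D - S⁻¹ μ μᵀ + W⁻¹ w wᵀ` with `D = diag Ξᵢ⁻¹`, `S = 1 + |μ|²` and `w = (1 - D) μ`,
and moreover `W = S - μᵀ D μ`. The rank-two matrix determinant lemma writes `det A` as `det D`
times a `2 × 2` determinant, which is `1 / (S W)`: with `e = μᵀ D⁻¹ μ - |μ|²`, `S W` times it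
is `(1 - e)(1 + e) + e² = 1`.
-/

open Filter Matrix Topology

namespace Matrix

variable {m K : Type*} [Fintype m] [DecidableEq m] [Field K]

theorem det_add_vecMulVec_add_vecMulVec {M : Matrix m m K} (hM : IsUnit M.det)
    (x₁ y₁ x₂ y₂ : m → K) :
    (M + vecMulVec x₁ y₁ + vecMulVec x₂ y₂).det =
      M.det * ((1 + y₁ ⬝ᵥ M⁻¹ *ᵥ x₁) * (1 + y₂ ⬝ᵥ M⁻¹ *ᵥ x₂) -
        (y₁ ⬝ᵥ M⁻¹ *ᵥ x₂) * (y₂ ⬝ᵥ M⁻¹ *ᵥ x₁)) := by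
  let U : Matrix m (Fin 2) K := of fun i => ![x₁ i, x₂ i]
  let V : Matrix (Fin 2) m K := of ![y₁, y₂]
  have hUV : vecMulVec x₁ y₁ + vecMulVec x₂ y₂ = U * V := by
    ext i j
    simp [U, V, mul_apply, Fin.sum_univ_two, vecMulVec_apply]
  have hVU : ∀ k l, (V * M⁻¹ * U) k l = ![y₁, y₂] k ⬝ᵥ M⁻¹ *ᵥ ![x₁, x₂] l := by
    intro k l
    rw [dotProduct_mulVec]
    fin_cases k <;> fin_cases l <;> simp [U, V, mul_apply, dotProduct, vecMul]
  rw [add_assoc, hUV, det_add_mul U V hM, det_fin_two]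
  simp [hVU]

theorem det_sub_smul_vecMulVec_add_smul_vecMulVec {M : Matrix m m K} (hM : IsUnit M.det)
    (hMT : Mᵀ = M) (x : m → K) {s w : K} (hs : s = 1 + x ⬝ᵥ x) (hw : w = s - x ⬝ᵥ M *ᵥ x)
    (hs0 : s ≠ 0) (hw0 : w ≠ 0) :
    (M - s⁻¹ • vecMulVec x x + w⁻¹ • vecMulVec (x - M *ᵥ x) (x - M *ᵥ x)).det =
      M.det / (s * w) := by
  have hinv : M⁻¹ *ᵥ (M *ᵥ x) = x := by
    rw [mulVec_mulVec, nonsing_inv_mul M hM, one_mulVec]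
  have hsymm : ∀ z, (M *ᵥ x) ⬝ᵥ z = x ⬝ᵥ M *ᵥ z := fun z => by
    rw [← vecMul_transpose, hMT, dotProduct_mulVec]
  have hM_sub : M⁻¹ *ᵥ (x - M *ᵥ x) = M⁻¹ *ᵥ x - x := by rw [mulVec_sub, hinv]
  have hcross : (M *ᵥ x) ⬝ᵥ M⁻¹ *ᵥ x = x ⬝ᵥ x := by
    rw [hsymm, mulVec_mulVec, mul_nonsing_inv M hM, one_mulVec]
  rw [sub_eq_add_neg, ← neg_smul, ← vecMulVec_smul, ← vecMulVec_smul,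
    det_add_vecMulVec_add_vecMulVec hM]
  simp only [smul_dotProduct, smul_eq_mul, hM_sub, sub_dotProduct, dotProduct_sub, hcross]
  rw [hsymm, dotProduct_comm x (M⁻¹ *ᵥ x)]
  subst hs hw
  field_simp
  ring

theorem tendsto_det_smul_add_div_pow_card {n : Type*} [Fintype n] [DecidableEq n]
    (A B : Matrix n n ℝ) :
    Tendsto (fun t : ℝ => (t • A + B).det / t ^ Fintype.card n) atTop (𝓝 A.det) := by
  have hlim : Tendsto (fun t : ℝ => A + t⁻¹ • B) atTop (𝓝 A) := by
    simpa using tendsto_const_nhds.add ((tendsto_inv_atTop_zero (𝕜 := ℝ)).smul_const B)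
  refine ((continuous_id.matrix_det.tendsto A).comp hlim).congr' ?_
  filter_upwards [eventually_ne_atTop 0] with t ht
  rw [Function.comp_apply, id, eq_div_iff (pow_ne_zero _ ht), mul_comm, ← det_smul, smul_add,
    smul_smul, mul_inv_cancel₀ ht, one_smul]

end Matrix

namespace MuSector

noncomputable section

variable {n : Type*} (L : ℝ) (a μ : n → ℝ)

def xi (i : n) : ℝ := 1 + a i ^ 2 / L ^ 2

theorem xi_pos (i : n) : 0 < xi L a i := by
  unfold xi
  positivity

theorem div_mul_xi_eq_one_sub_inv (i : n) : a i ^ 2 / (L ^ 2 * xi L a i) = 1 - (xi L a i)⁻¹ := by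
  have hsub : xi L a i - 1 = a i ^ 2 / L ^ 2 := add_sub_cancel_left 1 _
  rw [← div_div, ← hsub, sub_div, div_self (xi_pos L a i).ne', one_div]

variable [Fintype n]

def weight : ℝ := 1 + ∑ i, a i ^ 2 * μ i ^ 2 / (L ^ 2 * xi L a i)

theorem weight_pos : 0 < weight L a μ :=
  add_pos_of_pos_of_nonneg one_pos <| Finset.sum_nonneg fun i _ => by
    have := xi_pos L a i
    positivity

variable [DecidableEq n]

def gammaTilde (r : ℝ) : Matrix n n ℝ := of fun i j =>
  (if i = j then (r ^ 2 + a i ^ 2) / xi L a i else 0) -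
    r ^ 2 / (1 + ∑ k, μ k ^ 2) * (μ i * μ j) -
    (L ^ 2 - r ^ 2) / (4 * weight L a μ) * (2 * a i ^ 2 * μ i / (L ^ 2 * xi L a i)) *
      (2 * a j ^ 2 * μ j / (L ^ 2 * xi L a j))

def gammaTildeLeading : Matrix n n ℝ :=
  diagonal (xi L a)⁻¹ - (1 + ∑ k, μ k ^ 2)⁻¹ • vecMulVec μ μ +
    (weight L a μ)⁻¹ • vecMulVec (μ - diagonal (xi L a)⁻¹ *ᵥ μ) (μ - diagonal (xi L a)⁻¹ *ᵥ μ)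

theorem weight_eq :
    weight L a μ = (1 + ∑ k, μ k ^ 2) - μ ⬝ᵥ diagonal (xi L a)⁻¹ *ᵥ μ := by
  simp only [weight, dotProduct, mulVec_diagonal, add_sub_assoc, ← Finset.sum_sub_distrib]
  congr 1
  refine Finset.sum_congr rfl fun i _ => ?_
  rw [mul_div_right_comm, div_mul_xi_eq_one_sub_inv, Pi.inv_apply]
  ring

theorem gammaTilde_eq (r : ℝ) :
    gammaTilde L a μ r = r ^ 2 • gammaTildeLeading L a μ + gammaTilde L a μ 0 := by
  have hv (i : n) : 2 * a i ^ 2 * μ i / (L ^ 2 * xi L a i) = 2 * (μ i - (xi L a i)⁻¹ * μ i) := by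
    rw [mul_div_right_comm, mul_div_assoc, div_mul_xi_eq_one_sub_inv]
    ring
  ext i j
  simp only [gammaTilde, gammaTildeLeading, of_apply, Matrix.add_apply, Matrix.sub_apply,
    Matrix.smul_apply, smul_eq_mul, vecMulVec_apply, diagonal_apply, mulVec_diagonal,
    Pi.sub_apply, Pi.inv_apply, hv]
  split_ifs with hij
  · subst hij
    ring
  · ring

theorem det_gammaTildeLeading :
    (gammaTildeLeading L a μ).det = (weight L a μ * (1 + ∑ i, μ i ^ 2) * ∏ i, xi L a i)⁻¹ := by
  have hs : (1 : ℝ) + ∑ i, μ i ^ 2 = 1 + μ ⬝ᵥ μ := by simp only [dotProduct, sq]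
  have hM : IsUnit (diagonal (xi L a)⁻¹).det := by
    simpa [det_diagonal, Finset.prod_ne_zero_iff] using fun i => (xi_pos L a i).ne'
  rw [gammaTildeLeading, det_sub_smul_vecMulVec_add_smul_vecMulVec hM (diagonal_transpose _) μ hs
    (weight_eq L a μ) (by positivity) (weight_pos L a μ).ne', det_diagonal]
  simp only [Pi.inv_apply, Finset.prod_inv_distrib]
  rw [div_eq_mul_inv, ← mul_inv, mul_comm _ (weight L a μ), mul_comm]

theorem tendsto_det_gammaTilde_div_pow :
    Tendsto (fun r => (gammaTilde L a μ r).det / r ^ (2 * Fintype.card n)) atTop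
      (𝓝 (gammaTildeLeading L a μ).det) := by
  refine ((tendsto_det_smul_add_div_pow_card _ (gammaTilde L a μ 0)).comp
    (tendsto_pow_atTop two_ne_zero)).congr fun r => ?_
  rw [Function.comp_apply, gammaTilde_eq L a μ r, pow_mul]

end

end MuSector

theorem mu_sector_det_asymptotics_general
    (N : ℕ) (L : ℝ) (a : Fin N → ℝ)
    (μ : Fin N → ℝ) :
    let Ξ : Fin N → ℝ := fun i => 1 + a i ^ 2 / L ^ 2
    let W : ℝ := 1 + ∑ i, a i ^ 2 * μ i ^ 2 / (L ^ 2 * Ξ i)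
    let γ : ℝ → Matrix (Fin N) (Fin N) ℝ := fun r => Matrix.of fun i j =>
      (if i = j then (r ^ 2 + a i ^ 2) / Ξ i else 0) -
        r ^ 2 / (1 + ∑ k, μ k ^ 2) * (μ i * μ j) -
        (L ^ 2 - r ^ 2) / (4 * W) * (2 * a i ^ 2 * μ i / (L ^ 2 * Ξ i)) *
          (2 * a j ^ 2 * μ j / (L ^ 2 * Ξ j))
    let c : ℝ :=
      ((1 + ∑ i, a i ^ 2 * μ i ^ 2 / (L ^ 2 * Ξ i)) * (1 + ∑ i, μ i ^ 2) * ∏ i, Ξ i)⁻¹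
    Filter.Tendsto (fun r : ℝ => (γ r).det / r ^ (2 * N)) Filter.atTop (nhds c) ∧
      0 < c := by
  intro Ξ W γ c
  change Tendsto (fun r => (MuSector.gammaTilde L a μ r).det / r ^ (2 * N)) atTop (𝓝 c) ∧ 0 < c
  have hc : c = (MuSector.gammaTildeLeading L a μ).det :=
    (MuSector.det_gammaTildeLeading L a μ).symm
  refine ⟨?_, ?_⟩
  · simpa [hc] using MuSector.tendsto_det_gammaTilde_div_pow L a μ
  · have := MuSector.xi_pos L a
    have := MuSector.weight_pos L a μ
    positivity

/-- Asymptotics of the determinant of the `μ`-sector matrix `γ̃(r)`: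
`lim_{r → ∞} r^{-2N} det γ̃(r)
  = ((1 + ∑ᵢ aᵢ² μᵢ²/(ℓ² Ξᵢ)) (1 + ∑ᵢ μᵢ²) ∏ᵢ Ξᵢ)⁻¹ > 0`. -/
theorem mu_sector_det_asymptotics
    (N : ℕ) (hN : 1 ≤ N) (L : ℝ) (hL : 0 < L) (a : Fin N → ℝ) (ha : ∀ i, a i ≠ 0)
    (μ : Fin N → ℝ) :
    let Ξ : Fin N → ℝ := fun i => 1 + a i ^ 2 / L ^ 2
    let W : ℝ := 1 + ∑ i, a i ^ 2 * μ i ^ 2 / (L ^ 2 * Ξ i)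
    let γ : ℝ → Matrix (Fin N) (Fin N) ℝ := fun r => Matrix.of fun i j =>
      (if i = j then (r ^ 2 + a i ^ 2) / Ξ i else 0) -
        r ^ 2 / (1 + ∑ k, μ k ^ 2) * (μ i * μ j) -
        (L ^ 2 - r ^ 2) / (4 * W) * (2 * a i ^ 2 * μ i / (L ^ 2 * Ξ i)) *
          (2 * a j ^ 2 * μ j / (L ^ 2 * Ξ j))
    let c : ℝ :=
      ((1 + ∑ i, a i ^ 2 * μ i ^ 2 / (L ^ 2 * Ξ i)) * (1 + ∑ i, μ i ^ 2) * ∏ i, Ξ i)⁻¹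
    Filter.Tendsto (fun r : ℝ => (γ r).det / r ^ (2 * N)) Filter.atTop (nhds c) ∧
      0 < c :=
  mu_sector_det_asymptotics_general N L a μ
end
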